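/- arXiv:2212.13219 — 7 statements merged into one kernel-verified Lean document; each statement's English description precedes it below -/
import Mathlib

section
/- Let V be a finite vector space and X ≤ GL(V). The affine semidirect product G = V ⋊ X, acting on the set V (with V acting by translations and X acting linearly), is an IBIS permutation group if and only if X is IBIS in its action on V \ {0}. -/
section IBIS
variable {G : Type*} [Group G] {Ω : Type*} [MulAction G Ω]

/-- A list of points of `S ⊆ Ω` is irredundant for the subgroup `H ≤ G` if no entry is
fixed by the pointwise stabilizer of its predecessors. -/
def IsIrredundantOn (H : Subgroup G) (S : Set Ω) (l : List Ω) : Prop :=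
  (∀ x ∈ l, x ∈ S) ∧
  ∀ (i : ℕ) (hi : i < l.length), ∃ g ∈ H,
    (∀ x ∈ l.take i, g • x = x) ∧ g • l.get ⟨i, hi⟩ ≠ l.get ⟨i, hi⟩

/-- An irredundant base: an irredundant list whose pointwise stabilizer in `H` is trivial. -/
def IsIrredundantBaseOn (H : Subgroup G) (S : Set Ω) (l : List Ω) : Prop :=
  IsIrredundantOn H S l ∧ ∀ g ∈ H, (∀ x ∈ l, g • x = x) → g = 1

/-- `H` is IBIS on `S` if all its irredundant bases have the same cardinality. -/
def IsIBISOn (H : Subgroup G) (S : Set Ω) : Prop :=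
  ∀ l₁ l₂ : List Ω, IsIrredundantBaseOn H S l₁ → IsIrredundantBaseOn H S l₂ →
    l₁.length = l₂.length

end IBIS

section Affine

variable {F V : Type*} [Field F] [AddCommGroup V] [Module F V]

/-- The affine group `V ⋊ X` of all maps `w ↦ x w + v` with `x ∈ X ≤ GL(V)` and `v ∈ V`,
as a subgroup of the symmetric group on `V`. -/
def affineSemidirect (X : Subgroup (V ≃ₗ[F] V)) : Subgroup (Equiv.Perm V) where
  carrier := {f | ∃ x ∈ X, ∃ v : V, ∀ w, f w = x w + v}
  one_mem' := ⟨1, one_mem X, 0, fun w => by simp⟩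
  mul_mem' := by
    rintro f g ⟨x, hx, v, hv⟩ ⟨y, hy, u, hu⟩
    refine ⟨x * y, mul_mem hx hy, x u + v, fun w => ?_⟩
    have hmul : ∀ w : V, (x * y) w = x (y w) := fun _ => rfl
    simp [Equiv.Perm.mul_apply, hv, hu, map_add, hmul, add_assoc]
  inv_mem' := by
    rintro f ⟨x, hx, v, hv⟩
    refine ⟨x⁻¹, inv_mem hx, -(x⁻¹ v), fun w => ?_⟩
    rw [Equiv.Perm.inv_def, Equiv.symm_apply_eq, hv, map_add, map_neg]
    have h1 : x (x⁻¹ w) = w := x.apply_symm_apply w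
    have h2 : x (x⁻¹ v) = v := x.apply_symm_apply v
    rw [h1, h2]
    abel

/-- The affine permutation `w ↦ x w + v`. -/
def affPerm (x : V ≃ₗ[F] V) (v : V) : Equiv.Perm V :=
  x.toEquiv.trans (Equiv.addRight v)

@[simp] lemma affPerm_apply (x : V ≃ₗ[F] V) (v w : V) : affPerm x v w = x w + v := rfl

lemma affPerm_mem {X : Subgroup (V ≃ₗ[F] V)} {x : V ≃ₗ[F] V} (hx : x ∈ X) (v : V) :
    affPerm x v ∈ affineSemidirect X :=
  ⟨x, hx, v, fun _ => rfl⟩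

variable {X : Subgroup (V ≃ₗ[F] V)}

lemma base_cons (hv : ∃ v : V, v ≠ 0) {m : List V}
    (hm : IsIrredundantBaseOn X {v : V | v ≠ 0} m) :
    IsIrredundantBaseOn (affineSemidirect X) (Set.univ : Set V) (0 :: m) := by
  obtain ⟨⟨hmem, hirr⟩, hbase⟩ := hm
  refine ⟨⟨fun x _ => trivial, ?_⟩, ?_⟩
  · intro i hi
    match i with
    | 0 =>
      obtain ⟨v, hv⟩ := hv
      refine ⟨affPerm 1 v, affPerm_mem (one_mem X) v, fun x hx => by simp at hx, ?_⟩
      show affPerm 1 v 0 ≠ 0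
      simpa using hv
    | (i+1) =>
      have hi' : i < m.length := by simpa using hi
      obtain ⟨x, hxX, hfix, hmove⟩ := hirr i hi'
      refine ⟨affPerm x 0, affPerm_mem hxX 0, ?_, ?_⟩
      · intro w hw
        rw [List.take_succ_cons] at hw
        rcases List.mem_cons.1 hw with h | h
        · subst h
          show affPerm x 0 0 = 0
          simp
        · have hxw : x w = w := hfix w h
          show affPerm x 0 w = w
          simp [hxw]
      · have hget : (0 :: m).get ⟨i+1, hi⟩ = m.get ⟨i, hi'⟩ := rfl
        show affPerm x 0 ((0 :: m).get ⟨i+1, hi⟩) ≠ (0 :: m).get ⟨i+1, hi⟩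
        rw [hget]
        simpa using hmove
  · intro g hg hfix
    obtain ⟨x, hxX, v, hgv⟩ := hg
    have h0 : g 0 = 0 := hfix 0 (List.mem_cons_self)
    have hv0 : v = 0 := by
      have := hgv 0
      rw [h0, map_zero, zero_add] at this
      exact this.symm
    have hxm : ∀ w ∈ m, x • w = w := by
      intro w hw
      have hgw : g w = w := hfix w (List.mem_cons_of_mem _ hw)
      have := hgv w
      rw [hgw, hv0, add_zero] at this
      exact this.symm
    have hx1 : x = 1 := hbase x hxX hxm
    ext w
    rw [hgv w, hx1, hv0]
    simp

lemma G_base_ne_nil (hv : ∃ v : V, v ≠ 0) {l : List V}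
    (hl : IsIrredundantBaseOn (affineSemidirect X) (Set.univ : Set V) l) : l ≠ [] := by
  rintro rfl
  obtain ⟨v, hv⟩ := hv
  have h1 := hl.2 (affPerm (1 : V ≃ₗ[F] V) v) (affPerm_mem (one_mem X) v)
    (fun x hx => absurd hx List.not_mem_nil)
  have h2 : affPerm (1 : V ≃ₗ[F] V) v 0 = (1 : Equiv.Perm V) 0 := by rw [h1]
  simp at h2
  exact hv h2

lemma base_tail {w₀ : V} {m : List V}
    (hl : IsIrredundantBaseOn (affineSemidirect X) (Set.univ : Set V) (w₀ :: m)) :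
    IsIrredundantBaseOn X {v : V | v ≠ 0} (m.map (fun w => w - w₀)) := by
  obtain ⟨⟨-, hirr⟩, hbase⟩ := hl
  -- key: if g ∈ G fixes w₀ then g w = w ↔ x (w - w₀) = w - w₀
  have key : ∀ (g : Equiv.Perm V) (x : V ≃ₗ[F] V) (v : V), (∀ w, g w = x w + v) →
      g w₀ = w₀ → ∀ w, g w = x (w - w₀) + w₀ := by
    intro g x v hgv h0 w
    have hv : v = w₀ - x w₀ := by
      rw [eq_sub_iff_add_eq, add_comm, ← hgv w₀]
      exact h0
    rw [hgv w, hv, map_sub]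
    abel
  constructor
  constructor
  · -- entries are nonzero
    intro u hu
    obtain ⟨w, hw, rfl⟩ := List.mem_map.1 hu
    obtain ⟨⟨j, hj⟩, rfl⟩ := List.mem_iff_get.1 hw
    have hj' : j + 1 < (w₀ :: m).length := by simpa using Nat.succ_lt_succ hj
    obtain ⟨g, hgG, hfix, hmove⟩ := hirr (j+1) hj'
    have hg0 : g • w₀ = w₀ := by
      apply hfix
      rw [List.take_succ_cons]
      exact List.mem_cons_self
    have hget : (w₀ :: m).get ⟨j+1, hj'⟩ = m.get ⟨j, hj⟩ := rfl
    rw [hget] at hmove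
    intro h
    have : m.get ⟨j, hj⟩ = w₀ := by
      have := sub_eq_zero.1 h
      exact this
    rw [this] at hmove
    exact hmove hg0
  · -- irredundancy
    intro i hi
    have hi' : i < m.length := by simpa using hi
    have hi'' : i + 1 < (w₀ :: m).length := by simpa using Nat.succ_lt_succ hi'
    obtain ⟨g, hgG, hfix, hmove⟩ := hirr (i+1) hi''
    obtain ⟨x, hxX, v, hgv⟩ := hgG
    have hg0 : g w₀ = w₀ := by
      apply hfix
      rw [List.take_succ_cons]
      exact List.mem_cons_self
    have hkey := key g x v hgv hg0
    refine ⟨x, hxX, ?_, ?_⟩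
    · intro u hu
      rw [← List.map_take] at hu
      obtain ⟨w, hw, rfl⟩ := List.mem_map.1 hu
      have hgw : g w = w := by
        apply hfix
        rw [List.take_succ_cons]
        exact List.mem_cons_of_mem _ hw
      have hkw := hkey w
      rw [hgw] at hkw
      show x (w - w₀) = w - w₀
      exact eq_sub_of_add_eq hkw.symm
    · have hget : (m.map (fun w => w - w₀)).get ⟨i, hi⟩ = m.get ⟨i, hi'⟩ - w₀ := by
        simp
      have hget2 : (w₀ :: m).get ⟨i+1, hi''⟩ = m.get ⟨i, hi'⟩ := rfl
      rw [hget2] at hmove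
      rw [hget]
      intro h
      apply hmove
      show g (m.get ⟨i, hi'⟩) = m.get ⟨i, hi'⟩
      have hxh : x (m.get ⟨i, hi'⟩ - w₀) = m.get ⟨i, hi'⟩ - w₀ := h
      rw [hkey, hxh]
      abel
  · -- base property
    intro x hxX hfix
    set g := affPerm x (w₀ - x w₀) with hg
    have hgmem : g ∈ affineSemidirect X := affPerm_mem hxX _
    have hgfix : ∀ w ∈ w₀ :: m, g • w = w := by
      intro w hw
      rcases List.mem_cons.1 hw with h | h
      · rw [h]
        show affPerm x (w₀ - x w₀) w₀ = w₀
        simp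
      · have hx : x (w - w₀) = w - w₀ :=
          hfix (w - w₀) (List.mem_map.2 ⟨w, h, rfl⟩)
        show affPerm x (w₀ - x w₀) w = w
        rw [affPerm_apply]
        have hms : x w - x w₀ = w - w₀ := by rw [← map_sub, hx]
        have hxw : x w = w - w₀ + x w₀ := by rw [← hms]; abel
        rw [hxw]
        abel
    have hg1 : g = 1 := hbase g hgmem hgfix
    ext u
    have : g (u + w₀) = u + w₀ := by rw [hg1]; rfl
    rw [hg, affPerm_apply, map_add] at this
    have h3 : x u + w₀ = u + w₀ := by rw [← this]; abel
    have h2 : x u = u := add_right_cancel h3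
    simpa using h2

end Affine

/-- The affine semidirect product `V ⋊ X`, acting naturally on `V`, is an IBIS
permutation group if and only if `X` is IBIS in its action on `V \ {0}`. -/
theorem affine_isIBIS_iff_linear_isIBIS
    {F V : Type*} [Field F] [AddCommGroup V] [Module F V] [Finite V]
    (X : Subgroup (V ≃ₗ[F] V)) :
    IsIBISOn (affineSemidirect X) (Set.univ : Set V) ↔ IsIBISOn X {v : V | v ≠ 0} := by
  by_cases hV : ∃ v : V, v ≠ 0
  · constructor
    · intro hG m₁ m₂ h₁ h₂
      have := hG (0 :: m₁) (0 :: m₂) (base_cons hV h₁) (base_cons hV h₂)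
      simpa using this
    · intro hX l₁ l₂ h₁ h₂
      obtain ⟨w₁, m₁, rfl⟩ := List.exists_cons_of_ne_nil (G_base_ne_nil hV h₁)
      obtain ⟨w₂, m₂, rfl⟩ := List.exists_cons_of_ne_nil (G_base_ne_nil hV h₂)
      have := hX _ _ (base_tail h₁) (base_tail h₂)
      simpa using this
  · push_neg at hV
    have eX : ∀ m : List V, IsIrredundantBaseOn X {v : V | v ≠ 0} m → m = [] := by
      intro m hm
      match m with
      | [] => rfl
      | w :: m => exact absurd (hV w) (hm.1.1 w (List.mem_cons_self))
    have eG : ∀ l : List V, IsIrredundantBaseOn (affineSemidirect X)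
        (Set.univ : Set V) l → l = [] := by
      intro l hl
      match l with
      | [] => rfl
      | w :: m =>
        obtain ⟨g, -, -, hmove⟩ := hl.1.2 0 (by simp)
        exact absurd ((hV _).trans (hV _).symm) hmove
    constructor
    · intro _ m₁ m₂ h₁ h₂
      rw [eX m₁ h₁, eX m₂ h₂]
    · intro _ l₁ l₂ h₁ h₂
      rw [eG l₁ h₁, eG l₂ h₂]
end

section
/- Let q be a prime power and n > 1. The full semilinear group Γ(q^n) is IBIS in its action on GF(q^n) \ {0} if and only if n is a prime. -/
open Pointwise

section IBIS
variable {G : Type*} [Group G] {Ω : Type*} [MulAction G Ω]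

/-- The minimal size of a base for the action of `H` on `S`. -/
noncomputable def baseSizeOn (H : Subgroup G) (S : Set Ω) : ℕ :=
  sInf {k | ∃ l : List Ω, l.length = k ∧ (∀ x ∈ l, x ∈ S) ∧
    ∀ g ∈ H, (∀ x ∈ l, g • x = x) → g = 1}

end IBIS

section Semilinear

/-- The Singer subgroup `N` of `Γ(qⁿ)`: all multiplication maps `x ↦ ax`, `a ≠ 0`. -/
def SingerN (K : Type*) [Field K] : Subgroup (Equiv.Perm K) where
  carrier := {f | ∃ a : K, ∀ x, f x = a * x}
  one_mem' := ⟨1, fun x => (one_mul x).symm⟩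
  mul_mem' := by
    rintro f g ⟨a, ha⟩ ⟨b, hb⟩
    exact ⟨a * b, fun x => by simp [Equiv.Perm.mul_apply, ha, hb, mul_assoc]⟩
  inv_mem' := by
    rintro f ⟨a, ha⟩
    have ha0 : a ≠ 0 := by
      intro h
      have h1 : f 1 = f 0 := by rw [ha, ha]; simp [h]
      exact one_ne_zero (f.injective h1)
    refine ⟨a⁻¹, fun x => ?_⟩
    rw [Equiv.Perm.inv_def, Equiv.symm_apply_eq, ha]
    exact (mul_inv_cancel_left₀ ha0 x).symm

/-- The subgroup `Nᵐ` of `m`-th powers of elements of the Singer subgroup `N`. -/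
def SingerNpow (K : Type*) [Field K] (m : ℕ) : Subgroup (Equiv.Perm K) where
  carrier := {f | ∃ a : K, ∀ x, f x = a ^ m * x}
  one_mem' := ⟨1, fun x => by simp⟩
  mul_mem' := by
    rintro f g ⟨a, ha⟩ ⟨b, hb⟩
    exact ⟨a * b, fun x => by simp [Equiv.Perm.mul_apply, ha, hb, mul_pow, mul_assoc]⟩
  inv_mem' := by
    rintro f ⟨a, ha⟩
    have ha0 : a ^ m ≠ 0 := by
      intro h
      have h1 : f 1 = f 0 := by rw [ha, ha]; simp [h]
      exact one_ne_zero (f.injective h1)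
    refine ⟨a⁻¹, fun x => ?_⟩
    rw [Equiv.Perm.inv_def, Equiv.symm_apply_eq, ha, inv_pow]
    exact (mul_inv_cancel_left₀ ha0 x).symm

/-- The semilinear group `Γ(qⁿ)`: all maps `x ↦ a · σ x` with `a ≠ 0` and
`σ ∈ Gal(K/F)`, as a subgroup of the symmetric group on `K = GF(qⁿ)`. -/
def GammaL (F K : Type*) [Field F] [Field K] [Algebra F K] : Subgroup (Equiv.Perm K) where
  carrier := {f | ∃ (a : K) (σ : K ≃ₐ[F] K), ∀ x, f x = a * σ x}
  one_mem' := ⟨1, AlgEquiv.refl, fun x => by simp⟩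
  mul_mem' := by
    rintro f g ⟨a, σ, ha⟩ ⟨b, τ, hb⟩
    refine ⟨a * σ b, τ.trans σ, fun x => ?_⟩
    simp [Equiv.Perm.mul_apply, ha, hb, map_mul, mul_assoc]
  inv_mem' := by
    rintro f ⟨a, σ, ha⟩
    have ha0 : a ≠ 0 := by
      intro h
      have h1 : f 1 = f 0 := by rw [ha, ha]; simp [h]
      exact one_ne_zero (f.injective h1)
    refine ⟨σ.symm a⁻¹, σ.symm, fun x => ?_⟩
    rw [Equiv.Perm.inv_def, Equiv.symm_apply_eq, ha, map_mul,
      AlgEquiv.apply_symm_apply, AlgEquiv.apply_symm_apply]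
    exact (mul_inv_cancel_left₀ ha0 x).symm

/-- The element of the Singer subgroup given by multiplication by `a ≠ 0`. -/
def mulPerm {K : Type*} [Field K] (a : K) (ha : a ≠ 0) : Equiv.Perm K :=
  Equiv.mulLeft₀ a ha

end Semilinear

section FrobHelpers
variable {F K : Type*} [Field F] [Field K] [Algebra F K] [Fintype F] [Fintype K]

omit [Fintype K] in
lemma frob_add (j : ℕ) (x y : K) :
    (x + y) ^ (Fintype.card F) ^ j = x ^ (Fintype.card F) ^ j + y ^ (Fintype.card F) ^ j := by
  have hchar : CharP K (ringChar F) :=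
    charP_of_injective_algebraMap (algebraMap F K).injective (ringChar F)
  obtain ⟨d, hp, hcard⟩ := FiniteField.card F (ringChar F)
  haveI : Fact (Nat.Prime (ringChar F)) := ⟨hp⟩
  simp only [hcard, ← pow_mul]
  exact add_pow_char_pow (R := K) x y _ _

/-- The `q^j`-power Frobenius as an `F`-algebra automorphism of `K`. -/
noncomputable def frobAlg (F : Type*) {K : Type*} [Field F] [Field K] [Algebra F K]
    [Fintype F] [Fintype K] (j : ℕ) : K ≃ₐ[F] K :=
  let f : K →ₐ[F] K :=
    { toFun := fun x => x ^ (Fintype.card F) ^ j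
      map_one' := one_pow _
      map_mul' := fun x y => mul_pow x y _
      map_zero' := zero_pow (by positivity)
      map_add' := frob_add j
      commutes' := fun r => by
        show ((algebraMap F K) r) ^ (Fintype.card F) ^ j = (algebraMap F K) r
        rw [← map_pow, FiniteField.pow_card_pow] }
  AlgEquiv.ofBijective f ((Finite.injective_iff_bijective).1 (f.toRingHom.injective))

lemma frobAlg_apply (j : ℕ) (x : K) : frobAlg F j x = x ^ (Fintype.card F) ^ j := rfl

/-- The fixed field of an algebra automorphism, as an intermediate field. -/
def fixedIF (σ : K ≃ₐ[F] K) : IntermediateField F K where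
  carrier := {x | σ x = x}
  mul_mem' := fun hx hy => by simp only [Set.mem_setOf_eq] at *; rw [map_mul, hx, hy]
  one_mem' := map_one σ
  add_mem' := fun hx hy => by simp only [Set.mem_setOf_eq] at *; rw [map_add, hx, hy]
  zero_mem' := map_zero σ
  algebraMap_mem' := fun r => σ.commutes r
  inv_mem' := fun x hx => by simp only [Set.mem_setOf_eq] at *; rw [map_inv₀, hx]

/-- If `n` is prime, any automorphism which moves some point has fixed field `F`. -/
lemma fixed_mem_range {q n : ℕ} (hq : 1 < q) (hF : Fintype.card F = q)
    (hK : Fintype.card K = q ^ n) (hp : n.Prime) (σ : K ≃ₐ[F] K) {w : K} (hw : σ w ≠ w)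
    {u : K} (hu : σ u = u) : ∃ c : F, algebraMap F K c = u := by
  classical
  set E := fixedIF σ with hE
  haveI : FiniteDimensional F K := Module.Finite.of_finite
  have hfr : Module.finrank F K = n := by
    have h1 : Fintype.card K = q ^ Module.finrank F K := by
      rw [← hF]; exact Module.card_eq_pow_finrank
    rw [hK] at h1
    exact (Nat.pow_right_injective hq h1.symm)
  haveI : Fintype E := Fintype.ofFinite _
  have hdvd : Module.finrank F E ∣ n := by
    rw [← hfr]
    exact ⟨Module.finrank E K, (Module.finrank_mul_finrank F E K).symm⟩
  have hne : Module.finrank F E ≠ n := by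
    intro h
    have hTop : E = ⊤ := by
      apply IntermediateField.eq_of_le_of_finrank_le le_top
      rw [IntermediateField.finrank_top', hfr, h]
    exact hw (by have := hTop ▸ (IntermediateField.mem_top (x := w)); exact this)
  have h1 : Module.finrank F E = 1 := by
    rcases (Nat.Prime.eq_one_or_self_of_dvd hp _ hdvd) with h | h
    · exact h
    · exact absurd h hne
  have hbot : E = ⊥ := IntermediateField.finrank_eq_one_iff.mp h1
  have hu' : u ∈ E := hu
  rw [hbot, IntermediateField.mem_bot] at hu'
  obtain ⟨c, hc⟩ := hu'
  exact ⟨c, hc⟩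

end FrobHelpers

section GammaHelpers
variable {F K : Type*} [Field F] [Field K] [Algebra F K] [Fintype F] [Fintype K]

omit [Fintype F] [Fintype K] in
lemma mem_gammaL_iff {g : Equiv.Perm K} :
    g ∈ GammaL F K ↔ ∃ (a : K) (σ : K ≃ₐ[F] K), ∀ x, g x = a * σ x := Iff.rfl

/-- The element `x ↦ a • σ x` of the semilinear group, as a permutation. -/
def gammaElem (a : K) (ha : a ≠ 0) (σ : K ≃ₐ[F] K) : Equiv.Perm K :=
  σ.toEquiv.trans (Equiv.mulLeft₀ a ha)

omit [Fintype F] [Fintype K] in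
lemma gammaElem_apply (a : K) (ha : a ≠ 0) (σ : K ≃ₐ[F] K) (x : K) :
    gammaElem a ha σ x = a * σ x := rfl

omit [Fintype F] [Fintype K] in
lemma gammaElem_mem (a : K) (ha : a ≠ 0) (σ : K ≃ₐ[F] K) :
    gammaElem a ha σ ∈ GammaL F K := ⟨a, σ, fun _ => rfl⟩

omit [Fintype F] [Fintype K] in
lemma gammaL_coeff_ne_zero {g : Equiv.Perm K} {a : K} {σ : K ≃ₐ[F] K}
    (h : ∀ x, g x = a * σ x) : a ≠ 0 := by
  intro h0
  have h1 : g 1 = g 0 := by rw [h, h, h0, zero_mul, zero_mul]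
  exact one_ne_zero (g.injective h1)

omit [Fintype F] [Fintype K] in
/-- An automorphism fixing a generator of `Kˣ` is the identity. -/
lemma fix_of_fix_gen {ζ : Kˣ} (hζ : ∀ x : Kˣ, x ∈ Subgroup.zpowers ζ) {σ : K ≃ₐ[F] K}
    (h : σ (ζ : K) = ζ) (x : K) : σ x = x := by
  rcases eq_or_ne x 0 with rfl | hx
  · exact map_zero σ
  obtain ⟨k, hk⟩ := Subgroup.mem_zpowers_iff.mp (hζ (Units.mk0 x hx))
  have hxval : ((ζ : K)) ^ k = x := by
    have := congrArg (Units.val) hk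
    simpa using this
  rw [← hxval, map_zpow₀, h]

omit [Fintype F] [Fintype K] in
/-- Any element of the semilinear group fixing `1` and a generator is the identity. -/
lemma gammaL_eq_one {ζ : Kˣ} (hζ : ∀ x : Kˣ, x ∈ Subgroup.zpowers ζ) {g : Equiv.Perm K}
    (hgΓ : g ∈ GammaL F K) (h1 : g 1 = 1) (hz : g (ζ : K) = ζ) : g = 1 := by
  obtain ⟨a, σ, hg⟩ := hgΓ
  have ha : a = 1 := by
    have h := hg 1
    rw [h1, map_one, mul_one] at h
    exact h.symm
  have hσ : σ (ζ : K) = ζ := by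
    have h := hg (ζ : K)
    rw [ha, one_mul] at h
    rw [← h, hz]
  refine Equiv.ext fun x => ?_
  rw [hg x, ha, one_mul, fix_of_fix_gen hζ hσ x, Equiv.Perm.coe_one, id_eq]

omit [Fintype F] [Fintype K] in
lemma unit_pow_coe_eq_iff {y : Kˣ} {m : ℕ} (hm : 1 ≤ m) :
    ((y : K) ^ m = (y : K)) ↔ orderOf y ∣ m - 1 := by
  constructor
  · intro h
    have h2 : y ^ m = y ^ 1 := Units.ext (by simpa using h)
    rw [pow_eq_pow_iff_modEq] at h2
    exact (Nat.modEq_iff_dvd' hm).mp h2.symm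
  · intro h
    have h2 : y ^ m = y ^ 1 := by
      rw [pow_eq_pow_iff_modEq]
      exact ((Nat.modEq_iff_dvd' hm).mpr h).symm
    simpa using congrArg (Units.val) h2

end GammaHelpers

/-- Corollary 1.4: for `n > 1`, the full semilinear group `Γ(qⁿ)` is IBIS on
`GF(qⁿ) \ {0}` if and only if `n` is a prime. -/
theorem gammaL_isIBIS_iff_prime
    {F K : Type*} [Field F] [Field K] [Algebra F K] [Fintype F] [Fintype K]
    (q n : ℕ) (hn : 1 < n) (hF : Fintype.card F = q) (hK : Fintype.card K = q ^ n) :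
    IsIBISOn (GammaL F K) {v : K | v ≠ 0} ↔ n.Prime := by
  classical
  obtain ⟨ζ, hζ⟩ := IsCyclic.exists_generator (α := Kˣ)
  have hq : 1 < q := hF ▸ Fintype.one_lt_card
  have h4 : 4 ≤ q ^ n := by
    calc (4:ℕ) = 2 ^ 2 := by norm_num
    _ ≤ 2 ^ n := Nat.pow_le_pow_right (by norm_num) hn
    _ ≤ q ^ n := Nat.pow_le_pow_left hq n
  have hcardU : Fintype.card Kˣ = q ^ n - 1 := by rw [Fintype.card_units, hK]
  have hord : orderOf ζ = q ^ n - 1 := by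
    rw [orderOf_eq_card_of_forall_mem_zpowers hζ, Nat.card_eq_fintype_card, hcardU]
  have hz0 : (ζ : K) ≠ 0 := Units.ne_zero ζ
  have hz1 : (ζ : K) ≠ 1 := by
    intro h
    have h2 : orderOf ζ = 1 := orderOf_eq_one_iff.mpr (Units.ext (by simpa using h))
    rw [hord] at h2
    omega
  have hfa : ∀ (j : ℕ) (x : K), frobAlg F j x = x ^ q ^ j := by
    intro j x; rw [frobAlg_apply, hF]
  have hzpow : ∀ j : ℕ, 1 ≤ j → j < n → (ζ : K) ^ q ^ j ≠ (ζ : K) := by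
    intro j hj1 hjn h
    have hdvd := (unit_pow_coe_eq_iff (Nat.one_le_pow _ _ (by omega))).mp h
    rw [hord] at hdvd
    have hlt : q ^ j < q ^ n := Nat.pow_lt_pow_right hq hjn
    have hj : 1 < q ^ j := Nat.one_lt_pow (by omega) hq
    have hle := Nat.le_of_dvd (by omega) hdvd
    omega
  have hzq : (ζ : K) ^ q ≠ (ζ : K) := by
    have h := hzpow 1 le_rfl (by omega)
    rwa [pow_one] at h
  constructor
  · -- IBIS → prime
    intro hib
    by_contra hnp
    set p := n.minFac with hpdef
    have hpp : p.Prime := Nat.minFac_prime (by omega)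
    have hp2 : 2 ≤ p := hpp.two_le
    have hpdvd : p ∣ n := Nat.minFac_dvd n
    have hplt : p < n := by
      rcases lt_or_eq_of_le (Nat.le_of_dvd (by omega) hpdvd) with h | h
      · exact h
      · exact absurd (h ▸ hpp) hnp
    obtain ⟨k, hk⟩ := hpdvd
    have hdvd1 : q ^ p - 1 ∣ q ^ n - 1 := by
      have h := Nat.sub_dvd_pow_sub_pow (q ^ p) 1 k
      rwa [one_pow, ← pow_mul, ← hk] at h
    have hqp1 : 1 < q ^ p := Nat.one_lt_pow (by omega) hq
    have hqn1 : 1 < q ^ n := Nat.one_lt_pow (by omega) hq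
    set m := (q ^ n - 1) / (q ^ p - 1) with hmdef
    have hmmul : m * (q ^ p - 1) = q ^ n - 1 := Nat.div_mul_cancel hdvd1
    have hqpn : q ^ p ≤ q ^ n := Nat.pow_le_pow_right (by omega) hplt.le
    have hmpos : 0 < m := Nat.div_pos (by omega) (by omega)
    have hmdvd : m ∣ q ^ n - 1 := ⟨q ^ p - 1, hmmul.symm⟩
    have hyord : orderOf (ζ ^ m) = q ^ p - 1 := by
      rw [orderOf_pow' ζ hmpos.ne', hord, Nat.gcd_eq_right hmdvd, ← hmmul,
        Nat.mul_div_cancel_left _ hmpos]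
    set y : K := ((ζ ^ m : Kˣ) : K) with hydef
    have hy0 : y ≠ 0 := Units.ne_zero _
    have hyq : y ^ q ≠ y := by
      intro h
      have hdvd2 := (unit_pow_coe_eq_iff (by omega)).mp h
      rw [hyord] at hdvd2
      have h2 := Nat.le_of_dvd (by omega) hdvd2
      have h3 : q < q ^ p := by
        calc q = q ^ 1 := (pow_one q).symm
        _ < q ^ p := Nat.pow_lt_pow_right hq (by omega)
      omega
    have hyqp : y ^ q ^ p = y :=
      (unit_pow_coe_eq_iff (by omega)).mpr (by rw [hyord])
    have hzqp : (ζ : K) ^ q ^ p ≠ (ζ : K) := hzpow p (by omega) hplt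
    have hb1 : IsIrredundantBaseOn (GammaL F K) {v : K | v ≠ 0} [1, (ζ : K)] := by
      refine ⟨⟨?_, ?_⟩, ?_⟩
      · intro x hx
        simp only [List.mem_cons, List.not_mem_nil, or_false, List.mem_singleton] at hx
        rcases hx with rfl | rfl
        · exact one_ne_zero
        · exact hz0
      · intro i hi
        rcases i with _ | _ | i
        · refine ⟨gammaElem (ζ : K) hz0 AlgEquiv.refl, gammaElem_mem _ _ _, ?_, ?_⟩
          · intro x hx; simp at hx
          · show gammaElem (ζ : K) hz0 AlgEquiv.refl • (1 : K) ≠ 1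
            rw [Equiv.Perm.smul_def, gammaElem_apply]
            simpa using hz1
        · refine ⟨gammaElem (1 : K) one_ne_zero (frobAlg F 1), gammaElem_mem _ _ _, ?_, ?_⟩
          · intro x hx
            simp only [List.take_succ_cons, List.take_zero, List.mem_singleton] at hx
            subst hx
            rw [Equiv.Perm.smul_def, gammaElem_apply, one_mul, hfa, one_pow]
          · show gammaElem (1 : K) one_ne_zero (frobAlg F 1) • (ζ : K) ≠ ζ
            rw [Equiv.Perm.smul_def, gammaElem_apply, one_mul, hfa, pow_one]
            exact hzq
        · exact absurd hi (by simp)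
      · intro g hgΓ hfix
        refine gammaL_eq_one hζ hgΓ ?_ ?_
        · have h := hfix 1 (by simp); rwa [Equiv.Perm.smul_def] at h
        · have h := hfix (ζ : K) (by simp); rwa [Equiv.Perm.smul_def] at h
    have hb2 : IsIrredundantBaseOn (GammaL F K) {v : K | v ≠ 0} [1, y, (ζ : K)] := by
      refine ⟨⟨?_, ?_⟩, ?_⟩
      · intro x hx
        simp only [List.mem_cons, List.not_mem_nil, or_false, List.mem_singleton] at hx
        rcases hx with rfl | rfl | rfl
        · exact one_ne_zero
        · exact hy0
        · exact hz0
      · intro i hi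
        rcases i with _ | _ | _ | i
        · refine ⟨gammaElem (ζ : K) hz0 AlgEquiv.refl, gammaElem_mem _ _ _, ?_, ?_⟩
          · intro x hx; simp at hx
          · show gammaElem (ζ : K) hz0 AlgEquiv.refl • (1 : K) ≠ 1
            rw [Equiv.Perm.smul_def, gammaElem_apply]
            simpa using hz1
        · refine ⟨gammaElem (1 : K) one_ne_zero (frobAlg F 1), gammaElem_mem _ _ _, ?_, ?_⟩
          · intro x hx
            simp only [List.take_succ_cons, List.take_zero, List.mem_singleton] at hx
            subst hx
            rw [Equiv.Perm.smul_def, gammaElem_apply, one_mul, hfa, one_pow]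
          · show gammaElem (1 : K) one_ne_zero (frobAlg F 1) • y ≠ y
            rw [Equiv.Perm.smul_def, gammaElem_apply, one_mul, hfa, pow_one]
            exact hyq
        · refine ⟨gammaElem (1 : K) one_ne_zero (frobAlg F p), gammaElem_mem _ _ _, ?_, ?_⟩
          · intro x hx
            simp only [List.take_succ_cons, List.take_zero, List.mem_cons,
              List.not_mem_nil, or_false, List.mem_singleton] at hx
            rcases hx with rfl | rfl
            · rw [Equiv.Perm.smul_def, gammaElem_apply, one_mul, hfa, one_pow]
            · rw [Equiv.Perm.smul_def, gammaElem_apply, one_mul, hfa]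
              exact hyqp
          · show gammaElem (1 : K) one_ne_zero (frobAlg F p) • (ζ : K) ≠ ζ
            rw [Equiv.Perm.smul_def, gammaElem_apply, one_mul, hfa]
            exact hzqp
        · exact absurd hi (by simp)
      · intro g hgΓ hfix
        refine gammaL_eq_one hζ hgΓ ?_ ?_
        · have h := hfix 1 (by simp); rwa [Equiv.Perm.smul_def] at h
        · have h := hfix (ζ : K) (by simp); rwa [Equiv.Perm.smul_def] at h
    have h23 := hib _ _ hb1 hb2
    simp at h23
  · -- prime → IBIS
    intro hp
    have hkey : ∀ l, IsIrredundantBaseOn (GammaL F K) {v : K | v ≠ 0} l → l.length = 2 := by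
      intro l hl
      obtain ⟨⟨hmem, hirr⟩, hbase⟩ := hl
      rcases l with _ | ⟨v₁, _ | ⟨v₂, _ | ⟨v₃, rest⟩⟩⟩
      · exfalso
        have h1 : gammaElem (ζ : K) hz0 AlgEquiv.refl = 1 :=
          hbase _ (gammaElem_mem _ _ _) (by intro x hx; simp at hx)
        have h2 := Equiv.ext_iff.mp h1 1
        rw [gammaElem_apply] at h2
        simp at h2
        exact hz1 (by rw [h2, Units.val_one])
      · exfalso
        have hv₁ : v₁ ≠ 0 := hmem v₁ (by simp)
        set φ := frobAlg F (K := K) 1 with hφdef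
        have hφv : φ v₁ ≠ 0 := fun h => hv₁ (φ.injective (by rw [h, map_zero]))
        have h1 : gammaElem (v₁ / φ v₁) (div_ne_zero hv₁ hφv) φ = 1 := by
          refine hbase _ (gammaElem_mem _ _ _) ?_
          intro x hx
          simp only [List.mem_singleton] at hx
          rw [hx, Equiv.Perm.smul_def, gammaElem_apply, div_mul_cancel₀ v₁ hφv]
        have e1 := Equiv.ext_iff.mp h1 1
        have e2 := Equiv.ext_iff.mp h1 (ζ : K)
        rw [gammaElem_apply] at e1 e2
        simp only [map_one, mul_one, Equiv.Perm.coe_one, id_eq] at e1 e2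
        rw [e1, one_mul] at e2
        have h3 := hfa 1 (ζ : K)
        rw [pow_one] at h3
        rw [← hφdef] at h3
        rw [h3] at e2
        exact hzq e2
      · rfl
      · exfalso
        have hv₁ : v₁ ≠ 0 := hmem v₁ (by simp)
        have hv₂ : v₂ ≠ 0 := hmem v₂ (by simp)
        have hv₃ : v₃ ≠ 0 := hmem v₃ (by simp)
        obtain ⟨h, hhΓ, hfix1, hne2⟩ := hirr 1 (by simp)
        obtain ⟨g, hgΓ, hfix2, hne3⟩ := hirr 2 (by simp)
        obtain ⟨b, τ, hh⟩ := hhΓ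
        obtain ⟨a, σ, hg⟩ := hgΓ
        have ha0 : a ≠ 0 := gammaL_coeff_ne_zero hg
        have hb0 : b ≠ 0 := gammaL_coeff_ne_zero hh
        have e1 : a * σ v₁ = v₁ := by
          have h5 := hfix2 v₁ (by simp)
          rwa [Equiv.Perm.smul_def, hg] at h5
        have e2 : a * σ v₂ = v₂ := by
          have h5 := hfix2 v₂ (by simp)
          rwa [Equiv.Perm.smul_def, hg] at h5
        have f1 : b * τ v₁ = v₁ := by
          have h5 := hfix1 v₁ (by simp)
          rwa [Equiv.Perm.smul_def, hh] at h5
        have hσv1 : σ v₁ = v₁ / a := by rw [eq_div_iff ha0, mul_comm]; exact e1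
        have hσv2 : σ v₂ = v₂ / a := by rw [eq_div_iff ha0, mul_comm]; exact e2
        have hτv1 : τ v₁ = v₁ / b := by rw [eq_div_iff hb0, mul_comm]; exact f1
        have hu : σ (v₂ / v₁) = v₂ / v₁ := by
          rw [map_div₀, hσv1, hσv2]
          field_simp
        have hw : σ (v₃ / v₁) ≠ v₃ / v₁ := by
          intro hc
          apply hne3
          show g • v₃ = v₃
          rw [Equiv.Perm.smul_def, hg]
          rw [map_div₀, hσv1] at hc
          have hne' : v₁ / a ≠ 0 := div_ne_zero hv₁ ha0
          have h5 : σ v₃ = v₃ / v₁ * (v₁ / a) := (div_eq_iff hne').mp hc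
          rw [h5]
          field_simp
        have hτu : τ (v₂ / v₁) ≠ v₂ / v₁ := by
          intro hc
          apply hne2
          show h • v₂ = v₂
          rw [Equiv.Perm.smul_def, hh]
          rw [map_div₀, hτv1] at hc
          have hne' : v₁ / b ≠ 0 := div_ne_zero hv₁ hb0
          have h5 : τ v₂ = v₂ / v₁ * (v₁ / b) := (div_eq_iff hne').mp hc
          rw [h5]
          field_simp
        obtain ⟨c, hc⟩ := fixed_mem_range hq hF hK hp σ hw hu
        apply hτu
        rw [← hc, AlgEquiv.commutes]
    intro l₁ l₂ hl₁ hl₂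
    rw [hkey l₁ hl₁, hkey l₂ hl₂]
end

section
/- Let a be an element of order 3 in the Singer subgroup N of Γ(5^2) and let G = ⟨φ, a⟩ ≤ Γ(5^2). Then G is not IBIS in its action on GF(25) \ {0}. -/
open Pointwise

section Aux

lemma mulPerm_apply {K : Type*} [Field K] (a : K) (ha : a ≠ 0) (x : K) :
    mulPerm a ha x = a * x := rfl

lemma mulPerm_pow_apply {K : Type*} [Field K] (a : K) (ha : a ≠ 0) (n : ℕ) (x : K) :
    ((mulPerm a ha) ^ n) x = a ^ n * x := by
  induction n with
  | zero => simp
  | succ n ih =>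
    rw [pow_succ', Equiv.Perm.mul_apply, ih, mulPerm_apply, pow_succ']
    ring

/-- The subgroup of perms of the form `x ↦ b x` or `x ↦ b x^5` with `b³ = 1`. -/
def Hsub (K : Type*) [Field K] (h25 : ∀ x : K, x ^ 25 = x) : Subgroup (Equiv.Perm K) where
  carrier := {f | ∃ b : K, b ^ 3 = 1 ∧ ((∀ x, f x = b * x) ∨ (∀ x, f x = b * x ^ 5))}
  one_mem' := ⟨1, one_pow 3, Or.inl fun x => (one_mul x).symm⟩
  mul_mem' := by
    rintro f g ⟨b, hb3, hb | hb⟩ ⟨c, hc3, hc | hc⟩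
    · exact ⟨b * c, by rw [mul_pow, hb3, hc3, one_mul],
        Or.inl fun x => by rw [Equiv.Perm.mul_apply, hc, hb, mul_assoc]⟩
    · exact ⟨b * c, by rw [mul_pow, hb3, hc3, one_mul],
        Or.inr fun x => by rw [Equiv.Perm.mul_apply, hc, hb, mul_assoc]⟩
    · refine ⟨b * c ^ 5, ?_, Or.inr fun x => by rw [Equiv.Perm.mul_apply, hc, hb]; ring⟩
      calc (b * c ^ 5) ^ 3 = b ^ 3 * (c ^ 3) ^ 5 := by ring
        _ = 1 := by rw [hb3, hc3]; ring
    · refine ⟨b * c ^ 5, ?_, Or.inl fun x => ?_⟩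
      · calc (b * c ^ 5) ^ 3 = b ^ 3 * (c ^ 3) ^ 5 := by ring
          _ = 1 := by rw [hb3, hc3]; ring
      · rw [Equiv.Perm.mul_apply, hc, hb]
        have : (c * x ^ 5) ^ 5 = c ^ 5 * x ^ 25 := by ring
        rw [this, h25]; ring
  inv_mem' := by
    rintro f ⟨b, hb3, hb | hb⟩
    · have hb0 : b ≠ 0 := by
        intro h; rw [h] at hb3; simp at hb3
      refine ⟨b⁻¹, by rw [inv_pow, hb3, inv_one], Or.inl fun x => ?_⟩
      rw [Equiv.Perm.inv_def, Equiv.symm_apply_eq, hb]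
      exact (mul_inv_cancel_left₀ hb0 x).symm
    · have hb0 : b ≠ 0 := by
        intro h; rw [h] at hb3; simp at hb3
      have hb25 : b ^ 25 = b := by
        calc b ^ 25 = (b ^ 3) ^ 8 * b := by ring
          _ = b := by rw [hb3, one_pow, one_mul]
      refine ⟨b⁻¹ ^ 5, ?_, Or.inr fun x => ?_⟩
      · calc (b⁻¹ ^ 5) ^ 3 = ((b ^ 3)⁻¹) ^ 5 := by rw [← inv_pow]; ring
          _ = 1 := by rw [hb3, inv_one, one_pow]
      · rw [Equiv.Perm.inv_def, Equiv.symm_apply_eq, hb]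
        have : (b⁻¹ ^ 5 * x ^ 5) ^ 5 = (b⁻¹) ^ 25 * x ^ 25 := by ring
        rw [this, inv_pow, hb25, h25, mul_inv_cancel_left₀ hb0]

end Aux

/-- The subgroup `G = ⟨φ, a⟩ ≤ Γ(5²)`, where `a` is an element of order `3` of the
Singer subgroup `N` and `φ : x ↦ x⁵`, is not IBIS on `GF(25) \ {0}`. -/
theorem gamma25_not_isIBIS
    {F K : Type*} [Field F] [Field K] [Algebra F K] [Fintype F] [Fintype K]
    (hF : Fintype.card F = 5) (hK : Fintype.card K = 5 ^ 2)
    (φ : Equiv.Perm K) (hφ : ∀ x : K, φ x = x ^ 5)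
    (a : K) (ha : a ≠ 0) (horder : orderOf (mulPerm a ha) = 3) :
    ¬ IsIBISOn (Subgroup.closure {φ, mulPerm a ha}) {v : K | v ≠ 0} := by
  classical
  -- basic facts about K
  have h25 : ∀ x : K, x ^ 25 = x := by
    intro x
    have := FiniteField.pow_card x
    rwa [hK] at this
  have hcardU : Fintype.card Kˣ = 24 := by
    rw [Fintype.card_units, hK]; norm_num
  obtain ⟨ζ, hζ⟩ := IsCyclic.exists_generator (α := Kˣ)
  have hordζ : orderOf ζ = 24 := by
    rw [orderOf_eq_card_of_forall_mem_zpowers hζ, Nat.card_eq_fintype_card, hcardU]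
  set x : K := (ζ : K) with hxdef
  have hx0 : x ≠ 0 := Units.ne_zero ζ
  have hxpow : ∀ n : ℕ, 0 < n → n < 24 → x ^ n ≠ 1 := by
    intro n hn hn24 h
    have hu : ζ ^ n = 1 := by
      ext; push_cast; exact h
    have := orderOf_dvd_of_pow_eq_one hu
    rw [hordζ] at this
    have := Nat.le_of_dvd hn this
    omega
  have hx4 : x ^ 4 ≠ 1 := hxpow 4 (by norm_num) (by norm_num)
  have hx12 : x ^ 12 ≠ 1 := hxpow 12 (by norm_num) (by norm_num)
  have hx5 : x ^ 5 ≠ x := by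
    intro h
    apply hx4
    have : x ^ 4 * x = 1 * x := by rw [one_mul, ← pow_succ]; exact h
    exact mul_right_cancel₀ hx0 this
  -- facts about a
  have ha3 : a ^ 3 = 1 := by
    have h1 : ((mulPerm a ha) ^ 3) 1 = 1 := by
      rw [← horder, pow_orderOf_eq_one]; rfl
    rw [mulPerm_pow_apply, mul_one] at h1
    exact h1
  have ha1 : a ≠ 1 := by
    intro h
    have : mulPerm a ha = 1 := by
      ext y; rw [mulPerm_apply, h, one_mul]; rfl
    rw [this] at horder
    simp at horder
  -- the closure is contained in Hsub
  have hmem_phi : φ ∈ Hsub K h25 :=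
    ⟨1, one_pow 3, Or.inr fun y => by rw [hφ, one_mul]⟩
  have hmem_a : mulPerm a ha ∈ Hsub K h25 := ⟨a, ha3, Or.inl fun y => rfl⟩
  have hle : Subgroup.closure {φ, mulPerm a ha} ≤ Hsub K h25 := by
    rw [Subgroup.closure_le]
    rintro f (rfl | rfl)
    · exact hmem_phi
    · exact hmem_a
  have hφmem : φ ∈ Subgroup.closure {φ, mulPerm a ha} :=
    Subgroup.subset_closure (Set.mem_insert _ _)
  have hamem : mulPerm a ha ∈ Subgroup.closure {φ, mulPerm a ha} :=
    Subgroup.subset_closure (Set.mem_insert_of_mem _ rfl)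
  have hax : ∀ y : K, y ≠ 0 → a * y ≠ y := by
    intro y hy h
    apply ha1
    have : a * y = 1 * y := by rw [one_mul]; exact h
    exact mul_right_cancel₀ hy this
  intro hIBIS
  -- first base : [x]
  have hbase1 : IsIrredundantBaseOn (Subgroup.closure {φ, mulPerm a ha}) {v : K | v ≠ 0} [x] := by
    constructor
    · constructor
      · intro y hy
        simp only [List.mem_singleton] at hy
        subst hy; exact hx0
      · intro i hi
        simp only [List.length_singleton] at hi
        have hi0 : i = 0 := by omega
        subst hi0
        refine ⟨mulPerm a ha, hamem, fun y hy => by simp at hy, ?_⟩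
        show mulPerm a ha x ≠ x
        rw [mulPerm_apply]
        exact hax x hx0
    · intro g hg hfix
      have hgx : g x = x := hfix x (List.mem_singleton.mpr rfl)
      obtain ⟨b, hb3, hb | hb⟩ := hle hg
      · have : b * x = x := by rw [← hb]; exact hgx
        have hb1 : b = 1 := by
          have : b * x = 1 * x := by rw [one_mul]; exact this
          exact mul_right_cancel₀ hx0 this
        ext y; rw [hb y, hb1, one_mul]; rfl
      · exfalso
        have hbx : b * x ^ 5 = x := by rw [← hb]; exact hgx
        have h15 : b ^ 3 * x ^ 15 = x ^ 3 := by
          have := congrArg (· ^ 3) hbx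
          simpa [mul_pow, ← pow_mul] using this
        rw [hb3, one_mul] at h15
        apply hx12
        have : x ^ 12 * x ^ 3 = 1 * x ^ 3 := by
          rw [one_mul, ← pow_add]; exact h15
        exact mul_right_cancel₀ (pow_ne_zero 3 hx0) this
  -- second base : [1, x]
  have hbase2 : IsIrredundantBaseOn (Subgroup.closure {φ, mulPerm a ha}) {v : K | v ≠ 0}
      [1, x] := by
    constructor
    · constructor
      · intro y hy
        simp only [List.mem_cons, List.mem_singleton, List.not_mem_nil, or_false] at hy
        rcases hy with rfl | rfl
        · exact one_ne_zero
        · exact hx0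
      · intro i hi
        simp only [List.length_cons, List.length_nil] at hi
        have hi01 : i = 0 ∨ i = 1 := by omega
        rcases hi01 with rfl | rfl
        · refine ⟨mulPerm a ha, hamem, fun y hy => by simp at hy, ?_⟩
          show mulPerm a ha 1 ≠ 1
          rw [mulPerm_apply, mul_one]
          exact ha1
        · refine ⟨φ, hφmem, ?_, ?_⟩
          · intro y hy
            simp only [List.take, List.mem_singleton] at hy
            subst hy
            show φ (1 : K) = 1
            rw [hφ, one_pow]
          · show φ x ≠ x
            rw [hφ]
            exact hx5
    · intro g hg hfix
      have hg1 : g 1 = 1 := hfix 1 (by simp)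
      have hgx : g x = x := hfix x (by simp)
      obtain ⟨b, hb3, hb | hb⟩ := hle hg
      · have hb1 : b = 1 := by
          have := hb 1
          rw [hg1, mul_one] at this
          exact this.symm
        ext y; rw [hb y, hb1, one_mul]; rfl
      · exfalso
        have hb1 : b = 1 := by
          have := hb 1
          rw [hg1, one_pow, mul_one] at this
          exact this.symm
        apply hx5
        have := hb x
        rw [hgx, hb1, one_mul] at this
        exact this.symm
  have := hIBIS [x] [1, x] hbase1 hbase2
  simp at this
end

section
/- Let q be an odd prime power, let a be a generator of the Singer subgroup N of Γ(q^4) (so |a| = q^4 − 1), and let G = ⟨φa, a^{q+1}⟩ ≤ Γ(q^4). Then G is IBIS in its action on GF(q^4) \ {0}, |G| = 4(q^3 − q^2 + q − 1), and the stabilizer in G of every nonzero vector has order 2. -/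
open Pointwise

namespace GammaIBISAux

/-- partial geometric sum `1 + q + ... + q^(j-1)` -/
def sig (q : ℕ) : ℕ → ℕ
  | 0 => 0
  | j+1 => sig q j + q ^ j

lemma sig_succ (q j : ℕ) : sig q (j+1) = sig q j + q ^ j := rfl

lemma sig_add (q j j' : ℕ) : sig q (j + j') = sig q j + q ^ j * sig q j' := by
  induction j' with
  | zero => simp [sig]
  | succ n ih =>
    have h : j + (n+1) = (j + n) + 1 := by omega
    rw [h, sig_succ, ih, sig_succ, pow_add]; ring

lemma sig_four_add (q n : ℕ) : sig q (n + 4) = sig q n + (q+1) * ((q^2+1) * q^n) := by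
  simp only [show n + 4 = (((n+1)+1)+1)+1 from rfl, sig_succ]; ring

lemma sig_mod4 (q J : ℕ) : ∃ c, sig q J = sig q (J % 4) + (q+1) * c := by
  induction J using Nat.strong_induction_on with
  | _ J ih =>
    by_cases h : J < 4
    · exact ⟨0, by rw [Nat.mod_eq_of_lt h]; ring⟩
    · obtain ⟨c, hc⟩ := ih (J - 4) (by omega)
      have h4 : J = (J - 4) + 4 := by omega
      have hm : (J - 4) % 4 = J % 4 := by omega
      refine ⟨c + (q^2+1) * q^(J-4), ?_⟩
      calc sig q J = sig q ((J - 4) + 4) := by rw [← h4]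
        _ = sig q (J - 4) + (q+1) * ((q^2+1) * q^(J-4)) := sig_four_add q (J-4)
        _ = sig q (J % 4) + (q+1) * (c + (q^2+1) * q^(J-4)) := by rw [hc, hm]; ring

lemma sig_cast {R : Type*} [CommRing R] {q : ℕ} (hq : (q : R) = -1) (J : ℕ) :
    (sig q J : R) = if J % 2 = 1 then 1 else 0 := by
  induction J with
  | zero => simp [sig]
  | succ n ih =>
    rw [sig_succ]
    push_cast
    rw [ih, hq]
    rcases Nat.even_or_odd n with h | h
    · have h1 : n % 2 = 0 := Nat.even_iff.mp h
      have h2 : (n+1) % 2 = 1 := by omega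
      simp [h1, h2, h.neg_one_pow]
    · have h1 : n % 2 = 1 := Nat.odd_iff.mp h
      have h2 : (n+1) % 2 = 0 := by omega
      simp [h1, h2, h.neg_one_pow]

section Field

set_option linter.unusedSectionVars false

variable {K : Type*} [Field K] [Fintype K] {q : ℕ} {a : K} {φ : Equiv.Perm K}

lemma mulPerm_apply {b : K} (hb : b ≠ 0) (x : K) : mulPerm b hb x = b * x := rfl

lemma mulPerm_pow_apply {b : K} (hb : b ≠ 0) (n : ℕ) (x : K) :
    ((mulPerm b hb) ^ n) x = b ^ n * x := by
  induction n generalizing x with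
  | zero => simp
  | succ n ih =>
    rw [pow_succ, Equiv.Perm.mul_apply, mulPerm_apply, ih, pow_succ]; ring

lemma orderOf_base (ha : a ≠ 0) (hgen : orderOf (mulPerm a ha) = q ^ 4 - 1) :
    orderOf a = q ^ 4 - 1 := by
  rw [← hgen]
  rw [orderOf_eq_orderOf_iff]
  intro n
  constructor
  · intro hn
    ext x
    rw [mulPerm_pow_apply, hn, one_mul, Equiv.Perm.one_apply]
  · intro hn
    have := congrArg (fun f : Equiv.Perm K => f 1) hn
    simpa [mulPerm_pow_apply] using this

lemma pow_eq_pow_iff (ha : a ≠ 0) {n m : ℕ} :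
    a ^ n = a ^ m ↔ n ≡ m [MOD orderOf a] := by
  have hval : ∀ k : ℕ, (((Units.mk0 a ha) ^ k : Kˣ) : K) = (a ^ k : K) := fun k => by
    simp
  have hord : orderOf a = orderOf (Units.mk0 a ha) := by
    rw [← orderOf_units]; rfl
  rw [hord, ← pow_eq_pow_iff_modEq (x := Units.mk0 a ha)]
  constructor
  · intro h; ext; rw [hval, hval]; exact h
  · intro h; rw [← hval, ← hval, h]

lemma exists_log (hK : Fintype.card K = q ^ 4) (ha : a ≠ 0)
    (hord : orderOf a = q ^ 4 - 1) {v : K} (hv : v ≠ 0) : ∃ e : ℕ, a ^ e = v := by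
  set u : Kˣ := Units.mk0 a ha with hu
  have huo : orderOf u = q ^ 4 - 1 := by rw [← orderOf_units]; exact hord
  have hcard : Nat.card Kˣ = q ^ 4 - 1 := by
    rw [Nat.card_units, Nat.card_eq_fintype_card, hK]
  have htop : Subgroup.zpowers u = ⊤ := by
    exact (Subgroup.card_eq_iff_eq_top (Subgroup.zpowers u)).mp
      (by rw [Nat.card_zpowers, huo, hcard])
  have hmem : Units.mk0 v hv ∈ Submonoid.powers u := by
    rw [(isOfFinOrder_of_finite u).mem_powers_iff_mem_zpowers]
    rw [htop]; exact Subgroup.mem_top _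
  obtain ⟨e, he⟩ := hmem
  refine ⟨e, ?_⟩
  have := congrArg Units.val he
  simpa [hu] using this

lemma pow_q4 (hK : Fintype.card K = q ^ 4) (x : K) : x ^ q ^ 4 = x := by
  rw [← hK]; exact FiniteField.pow_card x

lemma pow_q_mod4 (hK : Fintype.card K = q ^ 4) (x : K) (J : ℕ) :
    x ^ q ^ J = x ^ q ^ (J % 4) := by
  conv_lhs => rw [← Nat.div_add_mod J 4]
  generalize J / 4 = t
  induction t with
  | zero => simp
  | succ n ih =>
    have h : 4 * (n+1) + J % 4 = (4 * n + J % 4) + 4 := by omega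
    rw [h, pow_add, pow_mul, pow_q4 hK, ih]

lemma phiA_pow_apply (hφ : ∀ x : K, φ x = x ^ q) (ha : a ≠ 0) (j : ℕ) (x : K) :
    ((mulPerm a ha * φ) ^ j) x = a ^ sig q j * x ^ q ^ j := by
  induction j generalizing x with
  | zero => simp [sig]
  | succ n ih =>
    rw [pow_succ, Equiv.Perm.mul_apply, Equiv.Perm.mul_apply, hφ, mulPerm_apply, ih,
      mul_pow, ← pow_mul, sig_succ, pow_add, pow_succ, pow_mul]
    ring

/-- the carrier set of the subgroup `G` -/
def Scar (q : ℕ) (a : K) : Set (Equiv.Perm K) :=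
  {f | ∃ j k : ℕ, ∀ x, f x = a ^ (sig q j + (q+1) * k) * x ^ q ^ j}

lemma Scar_one : (1 : Equiv.Perm K) ∈ Scar q a :=
  ⟨0, 0, fun x => by simp [sig]⟩

lemma Scar_mul {f g : Equiv.Perm K} (hf : f ∈ Scar q a) (hg : g ∈ Scar q a) :
    f * g ∈ Scar q a := by
  obtain ⟨j, k, hf⟩ := hf
  obtain ⟨j', k', hg⟩ := hg
  refine ⟨j + j', q ^ j * k' + k, fun x => ?_⟩
  rw [Equiv.Perm.mul_apply, hg x, hf, mul_pow, ← pow_mul, ← pow_mul, ← mul_assoc,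
    ← pow_add]
  congr 1
  · congr 1; rw [sig_add]; ring
  · congr 1; rw [pow_add]; ring

/-- `G` as an explicitly described subgroup. -/
def SG (q : ℕ) (a : K) : Subgroup (Equiv.Perm K) where
  carrier := Scar q a
  one_mem' := Scar_one
  mul_mem' := Scar_mul
  inv_mem' := by
    intro f hf
    have hpow : ∀ n, f ^ n ∈ Scar q a := by
      intro n
      induction n with
      | zero => simpa using Scar_one
      | succ n ih => rw [pow_succ]; exact Scar_mul ih hf
    have hpos : 0 < orderOf f := orderOf_pos f
    have hinv : f⁻¹ = f ^ (orderOf f - 1) := by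
      apply inv_eq_of_mul_eq_one_right
      calc f * f ^ (orderOf f - 1) = f ^ (1 + (orderOf f - 1)) := by
            rw [pow_add, pow_one]
        _ = f ^ orderOf f := by congr 1; omega
        _ = 1 := pow_orderOf_eq_one f
    rw [hinv]; exact hpow _

lemma G_eq_SG (hφ : ∀ x : K, φ x = x ^ q) (ha : a ≠ 0)
    {G : Subgroup (Equiv.Perm K)}
    (hG : G = Subgroup.closure {mulPerm a ha * φ, mulPerm (a ^ (q + 1)) (pow_ne_zero _ ha)}) :
    G = SG q a := by
  apply le_antisymm
  · rw [hG]
    apply (Subgroup.closure_le _).mpr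
    rintro f (rfl | rfl)
    · refine ⟨1, 0, fun x => ?_⟩
      rw [Equiv.Perm.mul_apply, hφ, mulPerm_apply]
      simp [sig]
    · refine ⟨0, 1, fun x => ?_⟩
      rw [mulPerm_apply]
      simp [sig]
  · intro f hf
    obtain ⟨j, k, hfx⟩ := hf
    have hf' : f = (mulPerm (a ^ (q+1)) (pow_ne_zero _ ha)) ^ k * (mulPerm a ha * φ) ^ j := by
      ext x
      rw [Equiv.Perm.mul_apply, phiA_pow_apply hφ, mulPerm_pow_apply, hfx x, ← pow_mul,
        ← mul_assoc, ← pow_add]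
      congr 2
      ring
    rw [hf', hG]
    exact mul_mem (pow_mem (Subgroup.subset_closure (by simp)) k)
      (pow_mem (Subgroup.subset_closure (by simp)) j)

lemma q_bounds {q : ℕ} (hq2 : 2 ≤ q) :
    q ^ 3 < q ^ 4 - 1 ∧ q ^ 2 < q ^ 4 - 1 ∧ q < q ^ 4 - 1 ∧ 1 < q ^ 4 - 1 ∧
      q + 1 < q ^ 4 - 1 ∧ q ^ 2 ≠ 1 ∧ 2 ≤ q ^ 4 := by
  have h0 : q * 1 ≤ q * q := Nat.mul_le_mul_left _ (by omega)
  have h1 : 2 * 2 ≤ q * q := Nat.mul_le_mul hq2 hq2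
  have h2 : (q * q) * 2 ≤ (q * q) * q := Nat.mul_le_mul_left _ hq2
  have h3 : ((q * q) * q) * 2 ≤ ((q * q) * q) * q := Nat.mul_le_mul_left _ hq2
  have e2 : q ^ 2 = q * q := by ring
  have e3 : q ^ 3 = (q * q) * q := by ring
  have e4 : q ^ 4 = ((q * q) * q) * q := by ring
  rw [e2, e3, e4]
  rw [e2] at *
  set A := q * q with hA
  set B := A * q with hB
  set C := B * q with hC
  omega

lemma gv_mem (hq2 : 2 ≤ q) (hK : Fintype.card K = q ^ 4) (hφ : ∀ x : K, φ x = x ^ q)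
    (ha : a ≠ 0) (hord : orderOf a = q ^ 4 - 1) {d : ℕ} (hd : (q+1) * d = q ^ 4 - 1)
    (hd0 : 0 < d)
    {G : Subgroup (Equiv.Perm K)}
    (hG : G = Subgroup.closure {mulPerm a ha * φ, mulPerm (a ^ (q + 1)) (pow_ne_zero _ ha)})
    {v : K} (hv : v ≠ 0) :
    ∃ g ∈ G, ∀ x : K, g x = v * (v ^ q ^ 2)⁻¹ * x ^ q ^ 2 := by
  obtain ⟨e, he⟩ := exists_log hK ha hord hv
  set E := e * (q - 1) with hE
  set r := E % d with hr
  set t := E / d with ht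
  have hrt : d * t + r = E := Nat.div_add_mod E d
  have hrd : r < d := Nat.mod_lt _ hd0
  set k := d - 1 - r with hk
  have hsum : 1 + k + E = d * t + d := by omega
  have hs2 : sig q 2 = 1 + q := by simp [sig]
  have key : a ^ (sig q 2 + (q+1) * k) * v ^ q ^ 2 = v := by
    rw [← he, ← pow_mul, ← pow_add, pow_eq_pow_iff ha, hord, ← hd, Nat.modEq_iff_dvd]
    have hE' : (E : ℤ) = e * q - e := by
      rw [hE]; push_cast [Nat.cast_sub (show 1 ≤ q by omega)]; ring
    have hsum' : (1:ℤ) + k + E = d * t + d := by exact_mod_cast hsum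
    refine ⟨-((t:ℤ)+1), ?_⟩
    push_cast
    rw [hs2]
    push_cast
    linear_combination (-(q:ℤ)-1) * hsum' + ((q:ℤ)+1) * hE'
  refine ⟨(mulPerm (a ^ (q+1)) (pow_ne_zero _ ha)) ^ k * (mulPerm a ha * φ) ^ 2, ?_, ?_⟩
  · rw [hG]
    exact mul_mem (pow_mem (Subgroup.subset_closure (by simp)) k)
      (pow_mem (Subgroup.subset_closure (by simp)) 2)
  · intro x
    rw [Equiv.Perm.mul_apply, phiA_pow_apply hφ, mulPerm_pow_apply, ← pow_mul,
      ← mul_assoc, ← pow_add]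
    congr 1
    rw [eq_mul_inv_iff_mul_eq₀ (pow_ne_zero _ hv),
      show (q+1) * k + sig q 2 = sig q 2 + (q+1) * k by ring]
    exact key

lemma odd_case_contra (hq2 : 2 ≤ q) (hqodd : Odd q) (ha : a ≠ 0)
    (hord : orderOf a = q ^ 4 - 1) {d : ℕ} (hd : (q+1) * d = q ^ 4 - 1)
    {J KK e : ℕ} (hJodd : J % 2 = 1) {r : ℕ} (hrodd : r = 1 ∨ r = 3)
    (hfix : a ^ (sig q J + (q+1) * KK) * (a ^ e) ^ q ^ r = a ^ e) : False := by
  have hmod : sig q J + (q+1) * KK + e * q ^ r ≡ e [MOD q ^ 4 - 1] := by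
    rw [← hord, ← pow_eq_pow_iff ha, pow_add, pow_mul]
    exact hfix
  have hdvd : (q+1) ∣ q ^ 4 - 1 := ⟨d, hd.symm⟩
  have hmod2 : sig q J + (q+1) * KK + e * q ^ r ≡ e [MOD q + 1] := hmod.of_dvd hdvd
  haveI : NeZero (q+1) := ⟨by omega⟩
  have heq : ((sig q J + (q+1) * KK + e * q ^ r : ℕ) : ZMod (q+1)) = (e : ZMod (q+1)) :=
    (ZMod.natCast_eq_natCast_iff _ _ _).mpr hmod2
  have hqc : ((q : ℕ) : ZMod (q+1)) = -1 := by
    have h0 : ((q + 1 : ℕ) : ZMod (q+1)) = 0 := ZMod.natCast_self _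
    push_cast at h0
    exact eq_neg_of_add_eq_zero_left h0
  push_cast at heq
  rw [sig_cast hqc J, hJodd, if_pos rfl, hqc] at heq
  have hrpow : ((-1 : ZMod (q+1)) ^ r) = -1 := by
    rcases hrodd with rfl | rfl <;> norm_num
  rw [hrpow] at heq
  have h2e : (2 : ZMod (q+1)) * e = 1 := by linear_combination -heq
  have hunit : IsUnit (2 : ZMod (q+1)) := IsUnit.of_mul_eq_one _ h2e
  have h2 : ((2 : ℕ) : ZMod (q+1)) = (2 : ZMod (q+1)) := by push_cast; rfl
  have hcop : Nat.Coprime 2 (q+1) :=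
    (ZMod.isUnit_iff_coprime 2 (q+1)).mp (by rw [h2]; exact hunit)
  have hdvd2 : 2 ∣ q + 1 := by
    obtain ⟨c, hc⟩ := hqodd
    exact ⟨c + 1, by omega⟩
  have hgcd : Nat.gcd 2 (q+1) = 2 := Nat.gcd_eq_left hdvd2
  have hone : Nat.gcd 2 (q+1) = 1 := hcop
  omega

lemma stab_classify (hq2 : 2 ≤ q) (hqodd : Odd q) (hK : Fintype.card K = q ^ 4)
    (hφ : ∀ x : K, φ x = x ^ q) (ha : a ≠ 0) (hord : orderOf a = q ^ 4 - 1)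
    {d : ℕ} (hd : (q+1) * d = q ^ 4 - 1)
    {G : Subgroup (Equiv.Perm K)}
    (hG : G = Subgroup.closure {mulPerm a ha * φ, mulPerm (a ^ (q + 1)) (pow_ne_zero _ ha)})
    {v : K} (hv : v ≠ 0) {f : Equiv.Perm K} (hfG : f ∈ G) (hfv : f v = v) :
    f = 1 ∨ ∀ x : K, f x = v * (v ^ q ^ 2)⁻¹ * x ^ q ^ 2 := by
  have hfS : f ∈ Scar q a := by rw [G_eq_SG hφ ha hG] at hfG; exact hfG
  obtain ⟨J, KK, hf⟩ := hfS
  have hval : ∀ x : K, f x = a ^ (sig q J + (q+1) * KK) * x ^ q ^ (J % 4) := fun x => by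
    rw [hf x, pow_q_mod4 hK]
  have hfix : a ^ (sig q J + (q+1) * KK) * v ^ q ^ (J % 4) = v := by
    rw [← hval]; exact hfv
  obtain ⟨e, he⟩ := exists_log hK ha hord hv
  have hJ4 : J % 4 = 0 ∨ J % 4 = 1 ∨ J % 4 = 2 ∨ J % 4 = 3 := by omega
  rcases hJ4 with h0 | h1 | h2 | h3
  · left
    rw [h0, pow_zero, pow_one] at hfix
    have hcoe : a ^ (sig q J + (q+1) * KK) = 1 :=
      mul_right_cancel₀ hv (by rw [one_mul]; exact hfix)
    ext x
    rw [hval x, h0, hcoe, pow_zero, pow_one, one_mul, Equiv.Perm.one_apply]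
  · rw [h1, ← he] at hfix
    exact (odd_case_contra hq2 hqodd ha hord hd (by omega) (Or.inl rfl) hfix).elim
  · right
    intro x
    rw [hval x, h2]
    congr 1
    rw [eq_mul_inv_iff_mul_eq₀ (pow_ne_zero _ hv)]
    rw [h2] at hfix
    exact hfix
  · rw [h3, ← he] at hfix
    exact (odd_case_contra hq2 hqodd ha hord hd (by omega) (Or.inr rfl) hfix).elim

lemma gv_ne_one (hq2 : 2 ≤ q) (ha : a ≠ 0) (hord : orderOf a = q ^ 4 - 1)
    {v : K} (hv : v ≠ 0) {g : Equiv.Perm K}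
    (hg : ∀ x : K, g x = v * (v ^ q ^ 2)⁻¹ * x ^ q ^ 2) : g ≠ 1 := by
  intro h1
  obtain ⟨hb1, hb2, hb3, hb4, hb5, hb6, hb7⟩ := q_bounds hq2
  have hb : v * (v ^ q ^ 2)⁻¹ = 1 := by
    have h := hg 1
    rw [h1, Equiv.Perm.one_apply, one_pow, mul_one] at h
    exact h.symm
  have h2 := hg a
  rw [h1, Equiv.Perm.one_apply, hb, one_mul] at h2
  have hgs : a ^ q ^ 2 = a ^ 1 := by rw [pow_one]; exact h2.symm
  have hmod := (pow_eq_pow_iff ha).mp hgs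
  rw [hord] at hmod
  have hm' : q ^ 2 % (q ^ 4 - 1) = 1 % (q ^ 4 - 1) := hmod
  rw [Nat.mod_eq_of_lt hb2, Nat.mod_eq_of_lt hb4] at hm'
  exact hb6 hm'

lemma gv_fixes {q : ℕ} {v : K} (hv : v ≠ 0) {g : Equiv.Perm K}
    (hg : ∀ x : K, g x = v * (v ^ q ^ 2)⁻¹ * x ^ q ^ 2) : g v = v := by
  rw [hg v, mul_assoc, inv_mul_cancel₀ (pow_ne_zero _ hv), mul_one]

lemma gv_sq (hK : Fintype.card K = q ^ 4) {v : K} (hv : v ≠ 0) {g : Equiv.Perm K}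
    (hg : ∀ x : K, g x = v * (v ^ q ^ 2)⁻¹ * x ^ q ^ 2) : g ^ 2 = 1 := by
  have h44 : ∀ y : K, (y ^ q ^ 2) ^ q ^ 2 = y := fun y => by
    rw [← pow_mul, show q^2 * q^2 = q^4 by ring, pow_q4 hK]
  ext x
  rw [pow_two, Equiv.Perm.mul_apply, hg, hg, Equiv.Perm.one_apply,
    mul_pow, mul_pow, inv_pow, h44, h44]
  field_simp

lemma stab_card (hq2 : 2 ≤ q) (hqodd : Odd q) (hK : Fintype.card K = q ^ 4)
    (hφ : ∀ x : K, φ x = x ^ q) (ha : a ≠ 0) (hord : orderOf a = q ^ 4 - 1)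
    {d : ℕ} (hd : (q+1) * d = q ^ 4 - 1) (hd0 : 0 < d)
    {G : Subgroup (Equiv.Perm K)}
    (hG : G = Subgroup.closure {mulPerm a ha * φ, mulPerm (a ^ (q + 1)) (pow_ne_zero _ ha)})
    {v : K} (hv : v ≠ 0) :
    Nat.card ↥(G ⊓ MulAction.stabilizer (Equiv.Perm K) v) = 2 := by
  obtain ⟨g, hgG, hg⟩ := gv_mem hq2 hK hφ ha hord hd hd0 hG hv
  have hfix : g v = v := gv_fixes hv hg
  have hgne : g ≠ 1 := gv_ne_one hq2 ha hord hv hg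
  have hsq : g ^ 2 = 1 := gv_sq hK hv hg
  have hH : G ⊓ MulAction.stabilizer (Equiv.Perm K) v = Subgroup.zpowers g := by
    apply le_antisymm
    · intro f hf
      obtain ⟨hfG, hfs⟩ := Subgroup.mem_inf.mp hf
      have hfv : f v = v := by
        have := MulAction.mem_stabilizer_iff.mp hfs
        rwa [Equiv.Perm.smul_def] at this
      rcases stab_classify hq2 hqodd hK hφ ha hord hd hG hv hfG hfv with rfl | hform
      · exact Subgroup.one_mem _
      · have hfg : f = g := Equiv.ext fun x => by rw [hform x, hg x]
        rw [hfg]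
        exact Subgroup.mem_zpowers g
    · rw [Subgroup.zpowers_le]
      exact Subgroup.mem_inf.mpr ⟨hgG, MulAction.mem_stabilizer_iff.mpr
        (by rw [Equiv.Perm.smul_def]; exact hfix)⟩
  rw [hH, Nat.card_zpowers]
  haveI : Fact (Nat.Prime 2) := ⟨Nat.prime_two⟩
  exact orderOf_eq_prime hsq hgne

lemma card_G (hq2 : 2 ≤ q) (hK : Fintype.card K = q ^ 4)
    (hφ : ∀ x : K, φ x = x ^ q) (ha : a ≠ 0) (hord : orderOf a = q ^ 4 - 1)
    {d : ℕ} (hd : (q+1) * d = q ^ 4 - 1) (hd0 : 0 < d)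
    {G : Subgroup (Equiv.Perm K)}
    (hG : G = Subgroup.closure {mulPerm a ha * φ, mulPerm (a ^ (q + 1)) (pow_ne_zero _ ha)}) :
    Nat.card ↥G = 4 * d := by
  obtain ⟨hb1, hb2, hb3, hb4, hb5, hb6, hb7⟩ := q_bounds hq2
  have hmemF : ∀ (j k : ℕ),
      (mulPerm (a ^ (q+1)) (pow_ne_zero _ ha)) ^ k * (mulPerm a ha * φ) ^ j ∈ G := by
    intro j k
    rw [hG]
    exact mul_mem (pow_mem (Subgroup.subset_closure (by simp)) k)
      (pow_mem (Subgroup.subset_closure (by simp)) j)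
  have happ : ∀ (j k : ℕ) (x : K),
      ((mulPerm (a ^ (q+1)) (pow_ne_zero _ ha)) ^ k * (mulPerm a ha * φ) ^ j) x
        = a ^ (sig q j + (q+1) * k) * x ^ q ^ j := by
    intro j k x
    rw [Equiv.Perm.mul_apply, phiA_pow_apply hφ, mulPerm_pow_apply, ← pow_mul,
      ← mul_assoc, ← pow_add]
    congr 2
    ring
  set F : Fin 4 × Fin d → ↥G := fun p =>
    ⟨(mulPerm (a ^ (q+1)) (pow_ne_zero _ ha)) ^ (p.2 : ℕ) * (mulPerm a ha * φ) ^ (p.1 : ℕ),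
      hmemF _ _⟩ with hF
  have hbij : Function.Bijective F := by
    constructor
    · rintro ⟨j, k⟩ ⟨j', k'⟩ hFeq
      have heq : ∀ x : K, a ^ (sig q (j:ℕ) + (q+1) * (k:ℕ)) * x ^ q ^ (j:ℕ)
          = a ^ (sig q (j':ℕ) + (q+1) * (k':ℕ)) * x ^ q ^ (j':ℕ) := by
        intro x
        rw [← happ, ← happ]
        exact congrArg (fun f : ↥G => (f : Equiv.Perm K) x) hFeq
      have h1 := heq 1
      rw [one_pow, one_pow, mul_one, mul_one] at h1
      have h2 := heq a
      rw [h1] at h2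
      have h3 : a ^ q ^ (j:ℕ) = a ^ q ^ (j':ℕ) := mul_left_cancel₀ (pow_ne_zero _ ha) h2
      have h4 : q ^ (j:ℕ) = q ^ (j':ℕ) := by
        have hm := (pow_eq_pow_iff ha).mp h3
        rw [hord] at hm
        have hm' : q ^ (j:ℕ) % (q ^ 4 - 1) = q ^ (j':ℕ) % (q ^ 4 - 1) := hm
        have hj3 : q ^ (j:ℕ) ≤ q ^ 3 := Nat.pow_le_pow_right (by omega) (by omega)
        have hj3' : q ^ (j':ℕ) ≤ q ^ 3 := Nat.pow_le_pow_right (by omega) (by omega)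
        rwa [Nat.mod_eq_of_lt (by omega), Nat.mod_eq_of_lt (by omega)] at hm'
      have hj : j = j' := Fin.ext (Nat.pow_right_injective hq2 h4)
      subst hj
      have h5 := (pow_eq_pow_iff ha).mp h1
      rw [hord, ← hd] at h5
      have h6 := Nat.ModEq.add_left_cancel' (sig q (j:ℕ)) h5
      have h6' : ((q+1) * (k:ℕ)) % ((q+1) * d) = ((q+1) * (k':ℕ)) % ((q+1) * d) := h6
      rw [Nat.mul_mod_mul_left, Nat.mul_mod_mul_left] at h6'
      have h7 := Nat.eq_of_mul_eq_mul_left (show 0 < q + 1 by omega) h6'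
      rw [Nat.mod_eq_of_lt k.isLt, Nat.mod_eq_of_lt k'.isLt] at h7
      exact Prod.ext rfl (Fin.ext h7)
    · rintro ⟨f, hfG⟩
      have hfS : f ∈ Scar q a := by rw [G_eq_SG hφ ha hG] at hfG; exact hfG
      obtain ⟨J, KK, hf⟩ := hfS
      obtain ⟨c, hc⟩ := sig_mod4 q J
      refine ⟨(⟨J % 4, by omega⟩, ⟨(c + KK) % d, Nat.mod_lt _ hd0⟩), ?_⟩
      apply Subtype.ext
      show (mulPerm (a ^ (q+1)) (pow_ne_zero _ ha)) ^ ((c + KK) % d)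
          * (mulPerm a ha * φ) ^ (J % 4) = f
      ext x
      rw [happ, hf x, pow_q_mod4 hK x J]
      congr 1
      rw [pow_eq_pow_iff ha, hord, ← hd]
      calc sig q (J % 4) + (q+1) * ((c + KK) % d)
          ≡ sig q (J % 4) + (q+1) * (c + KK) [MOD (q+1) * d] :=
            Nat.ModEq.add_left _ (Nat.ModEq.mul_left' _ (Nat.mod_modEq _ _))
        _ = sig q J + (q+1) * KK := by rw [hc]; ring
  rw [← Nat.card_eq_of_bijective F hbij, Nat.card_eq_fintype_card]
  simp

lemma base_len (hq2 : 2 ≤ q) (hqodd : Odd q) (hK : Fintype.card K = q ^ 4)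
    (hφ : ∀ x : K, φ x = x ^ q) (ha : a ≠ 0) (hord : orderOf a = q ^ 4 - 1)
    {d : ℕ} (hd : (q+1) * d = q ^ 4 - 1) (hd0 : 0 < d)
    {G : Subgroup (Equiv.Perm K)}
    (hG : G = Subgroup.closure {mulPerm a ha * φ, mulPerm (a ^ (q + 1)) (pow_ne_zero _ ha)})
    {l : List K} (hl : IsIrredundantBaseOn G {v : K | v ≠ 0} l) : l.length = 2 := by
  obtain ⟨⟨hmem, hirr⟩, hbase⟩ := hl
  obtain ⟨hb1, hb2, hb3, hb4, hb5, hb6, hb7⟩ := q_bounds hq2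
  rcases l with _ | ⟨v, _ | ⟨w, _ | ⟨u, t⟩⟩⟩
  · exfalso
    have hp : mulPerm (a ^ (q+1)) (pow_ne_zero _ ha) ∈ G := by
      rw [hG]; exact Subgroup.subset_closure (by simp)
    have h1 := hbase _ hp (by simp)
    have happ := congrArg (fun f : Equiv.Perm K => f 1) h1
    simp only [mulPerm_apply, mul_one, Equiv.Perm.one_apply] at happ
    have hle := Nat.le_of_dvd (by omega) (hord ▸ orderOf_dvd_of_pow_eq_one happ)
    omega
  · exfalso
    have hv : v ≠ 0 := hmem v (by simp)
    obtain ⟨g, hgG, hg⟩ := gv_mem hq2 hK hφ ha hord hd hd0 hG hv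
    refine gv_ne_one hq2 ha hord hv hg (hbase g hgG ?_)
    intro x hx
    simp only [List.mem_singleton] at hx
    subst hx
    rw [Equiv.Perm.smul_def]
    exact gv_fixes hv hg
  · rfl
  · exfalso
    have hv : v ≠ 0 := hmem v (by simp)
    obtain ⟨g1, hg1G, hg1fix, hg1mv⟩ := hirr 1 (by simp)
    obtain ⟨g2, hg2G, hg2fix, hg2mv⟩ := hirr 2 (by simp)
    have hget1 : (v :: w :: u :: t).get ⟨1, by simp⟩ = w := rfl
    have hget2 : (v :: w :: u :: t).get ⟨2, by simp⟩ = u := rfl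
    have hg1v : g1 v = v := by
      have := hg1fix v (by simp)
      rwa [Equiv.Perm.smul_def] at this
    have hg2v : g2 v = v := by
      have := hg2fix v (by simp)
      rwa [Equiv.Perm.smul_def] at this
    have hg2w : g2 w = w := by
      have := hg2fix w (by simp)
      rwa [Equiv.Perm.smul_def] at this
    rcases stab_classify hq2 hqodd hK hφ ha hord hd hG hv hg1G hg1v with rfl | hform1
    · simp at hg1mv
    rcases stab_classify hq2 hqodd hK hφ ha hord hd hG hv hg2G hg2v with rfl | hform2
    · simp at hg2mv
    apply hg1mv
    rw [hget1, Equiv.Perm.smul_def, hform1 w, ← hform2 w]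
    exact hg2w

end Field

end GammaIBISAux


/-- For `q` an odd prime power and `a` a generator of the Singer subgroup `N` of `Γ(q⁴)`,
the group `G = ⟨φa, a^(q+1)⟩` is IBIS on `GF(q⁴) \ {0}`, has order
`4(q³ - q² + q - 1)`, and the stabilizer of every nonzero vector has order `2`. -/
theorem gammaL4_isIBIS_example
    {F K : Type*} [Field F] [Field K] [Algebra F K] [Fintype F] [Fintype K]
    (q : ℕ) (hq : Odd q) (hF : Fintype.card F = q) (hK : Fintype.card K = q ^ 4)
    (φ : Equiv.Perm K) (hφ : ∀ x : K, φ x = x ^ q)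
    (a : K) (ha : a ≠ 0) (hgen : orderOf (mulPerm a ha) = q ^ 4 - 1)
    (G : Subgroup (Equiv.Perm K))
    (hG : G = Subgroup.closure {mulPerm a ha * φ, mulPerm (a ^ (q + 1)) (pow_ne_zero _ ha)}) :
    IsIBISOn G {v : K | v ≠ 0} ∧
    Nat.card ↥G = 4 * (q ^ 3 - q ^ 2 + q - 1) ∧
    (∀ v : K, v ≠ 0 →
      Nat.card ↥(G ⊓ MulAction.stabilizer (Equiv.Perm K) v) = 2) := by
  classical
  have hq1 : 1 < Fintype.card F := Fintype.one_lt_card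
  rw [hF] at hq1
  have hq2 : 2 ≤ q := by omega
  have hord : orderOf a = q ^ 4 - 1 := GammaIBISAux.orderOf_base ha hgen
  obtain ⟨hb1, hb2, hb3, hb4, hb5, hb6, hb7⟩ := GammaIBISAux.q_bounds hq2
  set d := q ^ 3 - q ^ 2 + q - 1 with hdd
  have e1 : q ^ 2 ≤ q ^ 3 := Nat.pow_le_pow_right (by omega) (by omega)
  have e2 : 1 ≤ q ^ 3 - q ^ 2 + q := by omega
  have e3 : 1 ≤ q ^ 4 := by omega
  have hd : (q + 1) * d = q ^ 4 - 1 := by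
    rw [hdd]
    zify [e1, e2, e3]
    ring
  have hd0 : 0 < d := by
    rcases Nat.eq_zero_or_pos d with h | h
    · rw [h, Nat.mul_zero] at hd; omega
    · exact h
  refine ⟨?_, ?_, ?_⟩
  · intro l₁ l₂ h₁ h₂
    rw [GammaIBISAux.base_len hq2 hq hK hφ ha hord hd hd0 hG h₁,
      GammaIBISAux.base_len hq2 hq hK hφ ha hord hd hd0 hG h₂]
  · exact GammaIBISAux.card_G hq2 hK hφ ha hord hd hd0 hG
  · intro v hv
    exact GammaIBISAux.stab_card hq2 hq hK hφ ha hord hd hd0 hG hv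
end

section
/- Let r be an odd prime, q a prime power, and let G ≤ Γ(q^r) be the subgroup generated by φ and an element c of the Singer subgroup N of order (q^r − 1)/(q − 1). Then |G| = r(q^r − 1)/(q − 1) is odd and G is IBIS in its action on GF(q^r) \ {0}. -/
open Pointwise

/-- For `r` an odd prime and `c ∈ N ≤ Γ(q^r)` of order `(q^r - 1)/(q - 1)`, the group
`G = ⟨φ, c⟩` has odd order `r(q^r - 1)/(q - 1)` and is IBIS on `GF(q^r) \ {0}`. -/
theorem gammaL_odd_isIBIS_example
    {F K : Type*} [Field F] [Field K] [Algebra F K] [Fintype F] [Fintype K]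
    (q r : ℕ) (hr : r.Prime) (hodd : Odd r)
    (hF : Fintype.card F = q) (hK : Fintype.card K = q ^ r)
    (φ : Equiv.Perm K) (hφ : ∀ x : K, φ x = x ^ q)
    (c : K) (hc : c ≠ 0) (horder : orderOf (mulPerm c hc) = (q ^ r - 1) / (q - 1))
    (G : Subgroup (Equiv.Perm K))
    (hG : G = Subgroup.closure {φ, mulPerm c hc}) :
    Nat.card ↥G = r * ((q ^ r - 1) / (q - 1)) ∧
    Odd (Nat.card ↥G) ∧
    IsIBISOn G {v : K | v ≠ 0} := by
  classical
  have hq2 : 2 ≤ q := hF ▸ Fintype.one_lt_card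
  have hr2 : 2 ≤ r := hr.two_le
  set m : ℕ := (q ^ r - 1) / (q - 1) with hm
  -- geometric sum identity
  have hgeom : (q - 1) * ∑ i ∈ Finset.range r, q ^ i = q ^ r - 1 := by
    have h := geom_sum_mul (q : ℤ) r
    have h1 : ((q : ℤ) - 1) * ∑ i ∈ Finset.range r, (q : ℤ) ^ i = (q : ℤ) ^ r - 1 := by
      rw [mul_comm]; exact h
    have hq1 : (1:ℤ) ≤ (q:ℤ) := by exact_mod_cast Nat.one_le_of_lt hq2
    have hqr1 : (1:ℤ) ≤ (q:ℤ) ^ r := one_le_pow₀ hq1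
    have : ((q - 1 : ℕ) : ℤ) * ((∑ i ∈ Finset.range r, q ^ i : ℕ) : ℤ)
        = ((q ^ r - 1 : ℕ) : ℤ) := by
      push_cast [Nat.cast_sub (by omega : 1 ≤ q), Nat.cast_sub (by exact_mod_cast hqr1)]
      push_cast at h1 ⊢
      linarith [h1]
    exact_mod_cast this
  have hmS : m = ∑ i ∈ Finset.range r, q ^ i := by
    rw [hm, ← hgeom, Nat.mul_div_cancel_left _ (by omega : 0 < q - 1)]
  have hm_pos : 0 < m := by
    rw [hmS]
    exact Finset.sum_pos (fun i _ => pow_pos (by omega) _) ⟨0, by simp [hr.pos]⟩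
  have hmq : m * (q - 1) = q ^ r - 1 := by rw [hmS, mul_comm, hgeom]
  -- Frobenius facts
  have hpowcard : ∀ x : K, x ^ q ^ r = x := fun x => by
    rw [← hK]; exact FiniteField.pow_card x
  have hshift : ∀ (x : K) (i k : ℕ), x ^ q ^ (i + r * k) = x ^ q ^ i := by
    intro x i k
    induction k with
    | zero => simp
    | succ k ih =>
      have h1 : i + r * (k + 1) = (i + r * k) + r := by ring
      rw [h1, pow_add, pow_mul, hpowcard (x ^ q ^ (i + r * k)), ih]
  have hmod : ∀ (x : K) (i : ℕ), x ^ q ^ (i % r) = x ^ q ^ i := by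
    intro x i
    conv_rhs => rw [← Nat.mod_add_div i r]
    exact (hshift x (i % r) (i / r)).symm
  -- application lemmas
  have hMapp : ∀ (a : K) (ha : a ≠ 0) (x : K), mulPerm a ha x = a * x := by
    intro a ha x; rfl
  have hMpow : ∀ (j : ℕ) (x : K), ((mulPerm c hc) ^ j) x = c ^ j * x := by
    intro j
    induction j with
    | zero => intro x; simp
    | succ j ih =>
      intro x
      rw [pow_succ, Equiv.Perm.mul_apply, hMapp, ih, pow_succ]
      ring
  have hφpow : ∀ (i : ℕ) (x : K), (φ ^ i) x = x ^ q ^ i := by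
    intro i
    induction i with
    | zero => intro x; simp
    | succ i ih =>
      intro x
      rw [pow_succ, Equiv.Perm.mul_apply, hφ, ih, ← pow_mul, ← pow_succ']
  set M : Equiv.Perm K := mulPerm c hc with hMdef
  -- the "form" predicate
  have hP_pow : ∀ (g : Equiv.Perm K), (∃ i j : ℕ, ∀ x : K, g x = c ^ j * x ^ q ^ i) →
      ∀ n : ℕ, ∃ i j : ℕ, ∀ x : K, (g ^ n) x = c ^ j * x ^ q ^ i := by
    rintro g ⟨i, j, hg⟩ n
    induction n with
    | zero => exact ⟨0, 0, fun x => by simp⟩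
    | succ n ih =>
      obtain ⟨i', j', hg'⟩ := ih
      refine ⟨i' + i, j + j' * q ^ i, fun x => ?_⟩
      rw [pow_succ', Equiv.Perm.mul_apply, hg', hg, mul_pow, ← pow_mul, ← pow_mul,
        ← pow_add, pow_add c, mul_assoc]
  have hφG : φ ∈ G := hG ▸ Subgroup.subset_closure (by simp)
  have hMG : M ∈ G := hG ▸ Subgroup.subset_closure (by simp)
  have hfin : Finite (Equiv.Perm K) :=
    Finite.of_injective (fun g => (g : K → K)) (fun _ _ h => Equiv.coe_fn_injective h)
  have hG_forms : ∀ g ∈ G, ∃ i j : ℕ, ∀ x : K, g x = c ^ j * x ^ q ^ i := by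
    intro g hg
    rw [hG] at hg
    induction hg using Subgroup.closure_induction with
    | mem x hx =>
      rcases hx with hx | hx
      · exact ⟨1, 0, fun y => by rw [hx, hφ]; simp⟩
      · exact ⟨0, 1, fun y => by rw [hx, hMapp]; simp⟩
    | one => exact ⟨0, 0, fun y => by simp⟩
    | mul x y hx hy ihx ihy =>
      obtain ⟨i, j, hxf⟩ := ihx
      obtain ⟨i', j', hyf⟩ := ihy
      refine ⟨i' + i, j + j' * q ^ i, fun z => ?_⟩
      rw [Equiv.Perm.mul_apply, hxf, hyf, mul_pow, ← pow_mul, ← pow_mul,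
        ← pow_add, pow_add c, mul_assoc]
    | inv x hx ihx =>
      have hop : 0 < orderOf x := orderOf_pos x
      have hinv : x⁻¹ = x ^ (orderOf x - 1) := by
        apply inv_eq_of_mul_eq_one_right
        rw [← pow_succ', Nat.sub_add_cancel hop, pow_orderOf_eq_one]
      rw [hinv]
      exact hP_pow x ihx _
  have hujG : ∀ i j : ℕ, M ^ j * φ ^ i ∈ G := fun i j =>
    G.mul_mem (G.pow_mem hMG j) (G.pow_mem hφG i)
  have hujapp : ∀ (i j : ℕ) (x : K), (M ^ j * φ ^ i) x = c ^ j * x ^ q ^ i := by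
    intro i j x
    rw [Equiv.Perm.mul_apply, hφpow, hMpow]
  -- order of c as a field element
  have horderc : orderOf c = m := by
    rw [← horder]
    symm
    rw [orderOf_eq_orderOf_iff]
    intro n
    constructor
    · intro h
      have := congrArg (fun f : Equiv.Perm K => f 1) h
      simpa [hMpow] using this
    · intro h
      ext x
      simp [hMpow, h]
  have hcm1 : c ^ m = 1 := by rw [← horderc]; exact pow_orderOf_eq_one c
  -- injectivity of powers of c below m
  have hcu : orderOf (Units.mk0 c hc) = m := by
    rw [← horderc, ← orderOf_units]; rfl
  have powinj : ∀ j j' : ℕ, j < m → j' < m → c ^ j = c ^ j' → j = j' := by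
    intro j j' hj hj' h
    have hu : (Units.mk0 c hc) ^ j = (Units.mk0 c hc) ^ j' := by
      ext; simpa using h
    have hmodeq := pow_eq_pow_iff_modEq.mp hu
    rw [hcu] at hmodeq
    rwa [Nat.ModEq, Nat.mod_eq_of_lt hj, Nat.mod_eq_of_lt hj'] at hmodeq
  -- a generator of Kˣ
  obtain ⟨ζ, hζ⟩ := IsCyclic.exists_generator (α := Kˣ)
  have hζord : orderOf ζ = q ^ r - 1 := by
    rw [orderOf_eq_card_of_forall_mem_zpowers hζ, Nat.card_eq_fintype_card,
      Fintype.card_units, hK]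
  have hbound : ∀ i : ℕ, i < r → q ^ i < q ^ r - 1 := by
    intro i hi
    have h1 : q ^ i ≤ q ^ (r - 1) := Nat.pow_le_pow_right (by omega) (by omega)
    have h2 : 2 * q ^ (r - 1) ≤ q * q ^ (r - 1) := Nat.mul_le_mul_right _ hq2
    have h3 : q * q ^ (r - 1) = q ^ r := by
      rw [← pow_succ', Nat.sub_add_cancel (by omega)]
    have h4 : q ≤ q ^ (r - 1) := Nat.le_self_pow (by omega) q
    omega
  have expinj : ∀ i i' : ℕ, i < r → i' < r → (∀ x : K, x ^ q ^ i = x ^ q ^ i') → i = i' := by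
    intro i i' hi hi' h
    have hu : ζ ^ q ^ i = ζ ^ q ^ i' := by
      ext
      push_cast
      exact h (ζ : K)
    have hmodeq := pow_eq_pow_iff_modEq.mp hu
    rw [hζord] at hmodeq
    have h1 := hbound i hi
    have h2 := hbound i' hi'
    have : q ^ i = q ^ i' := by
      rwa [Nat.ModEq, Nat.mod_eq_of_lt h1, Nat.mod_eq_of_lt h2] at hmodeq
    exact Nat.pow_right_injective hq2 this
  have hfrob_ne : ∃ x : K, x ^ q ≠ x := by
    refine ⟨(ζ : K), fun hcon => ?_⟩
    have hu : ζ ^ q = ζ ^ 1 := by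
      ext; push_cast; simpa using hcon
    have hmodeq := pow_eq_pow_iff_modEq.mp hu
    rw [hζord] at hmodeq
    have h1 : q < q ^ r - 1 := by
      have := hbound 1 (by omega)
      simpa using this
    have h2 : 1 < q ^ r - 1 := by omega
    have : q = 1 := by
      rwa [Nat.ModEq, Nat.mod_eq_of_lt h1, Nat.mod_eq_of_lt h2] at hmodeq
    omega
  -- counting : |G| = r * m
  have hcard : Nat.card ↥G = r * m := by
    have hFdef : ∀ p : Fin r × Fin m, M ^ (p.2 : ℕ) * φ ^ (p.1 : ℕ) ∈ G :=
      fun p => hujG _ _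
    let Ff : Fin r × Fin m → ↥G := fun p => ⟨M ^ (p.2 : ℕ) * φ ^ (p.1 : ℕ), hFdef p⟩
    have hbij : Function.Bijective Ff := by
      constructor
      · rintro ⟨i, j⟩ ⟨i', j'⟩ h
        have hperm : M ^ (j : ℕ) * φ ^ (i : ℕ) = M ^ (j' : ℕ) * φ ^ (i' : ℕ) :=
          congrArg Subtype.val h
        have happ : ∀ x : K, c ^ (j : ℕ) * x ^ q ^ (i : ℕ)
            = c ^ (j' : ℕ) * x ^ q ^ (i' : ℕ) := by
          intro x
          rw [← hujapp, ← hujapp, hperm]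
        have hj : (j : ℕ) = (j' : ℕ) := by
          have := happ 1
          simp only [one_pow, mul_one] at this
          exact powinj _ _ j.isLt j'.isLt this
        have hi : (i : ℕ) = (i' : ℕ) := by
          apply expinj _ _ i.isLt i'.isLt
          intro x
          have := happ x
          rw [hj] at this
          exact mul_left_cancel₀ (pow_ne_zero _ hc) this
        exact Prod.ext (Fin.ext hi) (Fin.ext hj)
      · rintro ⟨g, hg⟩
        obtain ⟨i, j, hgf⟩ := hG_forms g hg
        refine ⟨(⟨i % r, Nat.mod_lt _ (by omega)⟩, ⟨j % m, Nat.mod_lt _ hm_pos⟩), ?_⟩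
        apply Subtype.ext
        ext x
        show (M ^ (j % m) * φ ^ (i % r)) x = g x
        rw [hujapp, hgf, hmod]
        congr 1
        conv_rhs => rw [← Nat.mod_add_div j m]
        rw [pow_add, pow_mul, hcm1, one_pow, mul_one]
    have := Nat.card_eq_of_bijective Ff hbij
    rw [← this]
    simp [Nat.card_eq_fintype_card]
  -- oddness of m
  have hmodd : Odd m := by
    rw [Nat.odd_iff, hmS, Finset.sum_nat_mod]
    rcases Nat.even_or_odd q with hq | hq
    · have : ∀ i ∈ Finset.range r, q ^ i % 2 = if i = 0 then 1 else 0 := by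
        intro i _
        rcases Nat.eq_zero_or_pos i with h0 | h0
        · simp [h0]
        · have : Even (q ^ i) := (Nat.even_pow).mpr ⟨hq, by omega⟩
          rw [Nat.even_iff] at this
          simp [this, Nat.pos_iff_ne_zero.mp h0]
      rw [Finset.sum_congr rfl this, Finset.sum_ite_eq' (Finset.range r) 0 (fun _ => 1)]
      simp [hr.pos]
    · have : ∀ i ∈ Finset.range r, q ^ i % 2 = 1 := by
        intro i _
        rw [← Nat.odd_iff]
        exact hq.pow
      rw [Finset.sum_congr rfl this, Finset.sum_const, Finset.card_range, smul_eq_mul]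
      have := Nat.odd_iff.mp hodd
      omega
  -- every m-th root of unity is a power of c
  have hroot : ∀ w : K, w ^ m = 1 → ∃ j0, j0 < m ∧ c ^ j0 = w := by
    intro w hw
    set A := (Polynomial.nthRoots m (1 : K)).toFinset with hA
    set B := (Finset.range m).image (c ^ ·) with hB
    have hBA : B ⊆ A := by
      intro x hx
      obtain ⟨j, hj, rfl⟩ := Finset.mem_image.mp hx
      rw [hA, Multiset.mem_toFinset, Polynomial.mem_nthRoots hm_pos,
        ← pow_mul, mul_comm, pow_mul, hcm1, one_pow]
    have hBcard : B.card = m := by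
      rw [hB, Finset.card_image_of_injOn, Finset.card_range]
      intro j hj j' hj' h
      exact powinj j j' (Finset.mem_range.mp hj) (Finset.mem_range.mp hj') h
    have hAcard : A.card ≤ m :=
      le_trans (Multiset.toFinset_card_le _) (by simpa using Polynomial.card_nthRoots m (1 : K))
    have hAB : A = B := (Finset.eq_of_subset_of_card_le hBA (by omega)).symm
    have hwA : w ∈ A := by
      rw [hA, Multiset.mem_toFinset, Polynomial.mem_nthRoots hm_pos]
      exact hw
    rw [hAB, hB] at hwA
    obtain ⟨j0, hj0, h⟩ := Finset.mem_image.mp hwA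
    exact ⟨j0, Finset.mem_range.mp hj0, h⟩
  -- every nonzero point is fixed by an element of the form c^{j0} x^q
  have hstab : ∀ v : K, v ≠ 0 → ∃ j0 : ℕ, c ^ j0 * v ^ q = v := by
    intro v hv
    have hvq : v ^ q ≠ 0 := pow_ne_zero _ hv
    have hv1 : v ^ (q ^ r - 1) = 1 := by
      rw [← hK]; exact FiniteField.pow_card_sub_one_eq_one v hv
    have hqm : v ^ (q * m) = v ^ m := by
      have he : q * m = m + m * (q - 1) := by
        have h1 : 1 + (q - 1) = q := by omega
        calc q * m = m * (1 + (q - 1)) := by rw [h1]; ring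
        _ = m + m * (q - 1) := by ring
      rw [he, pow_add, hmq, hv1, mul_one]
    have hwm : (v * (v ^ q)⁻¹) ^ m = 1 := by
      rw [mul_pow, inv_pow, ← pow_mul, mul_comm q m, mul_comm m q, hqm,
        mul_inv_cancel₀ (pow_ne_zero _ hv)]
    obtain ⟨j0, _, hj0⟩ := hroot _ hwm
    refine ⟨j0, ?_⟩
    rw [hj0]
    field_simp
  -- uniqueness : elements of the given form fixing v with equal exponent mod r agree
  have huniq : ∀ (v : K), v ≠ 0 → ∀ (g g' : Equiv.Perm K) (i j i' j' : ℕ),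
      (∀ x, g x = c ^ j * x ^ q ^ i) → (∀ x, g' x = c ^ j' * x ^ q ^ i') →
      i % r = i' % r → g v = v → g' v = v → g = g' := by
    intro v hv g g' i j i' j' hgf hg'f hii hgv hg'v
    have hvp : v ^ q ^ i = v ^ q ^ i' := by rw [← hmod v i, ← hmod v i', hii]
    have hcc : c ^ j = c ^ j' := by
      have h1 : c ^ j * v ^ q ^ i = c ^ j' * v ^ q ^ i := by
        rw [← hgf v, hgv, hvp, ← hg'f v]
        exact hg'v.symm
      exact mul_right_cancel₀ (pow_ne_zero _ hv) h1
    ext x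
    rw [hgf, hg'f, hcc, ← hmod x i, ← hmod x i', hii]
  -- powers of a fixed element of the form M^j0 * φ
  have hstabpow : ∀ (j0 n : ℕ), ∃ tt : ℕ, ∀ x : K, ((M ^ j0 * φ) ^ n) x = c ^ tt * x ^ q ^ n := by
    intro j0 n
    induction n with
    | zero => exact ⟨0, fun x => by simp⟩
    | succ n ih =>
      obtain ⟨tt, htt⟩ := ih
      refine ⟨tt + j0 * q ^ n, fun x => ?_⟩
      have hx1 : (M ^ j0 * φ) x = c ^ j0 * x ^ q := by
        rw [Equiv.Perm.mul_apply, hφ, hMpow]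
      rw [pow_succ, Equiv.Perm.mul_apply, hx1, htt, mul_pow, ← pow_mul, ← pow_mul]
      rw [pow_add c, pow_succ q n, mul_comm (q ^ n) q, mul_assoc]
  have hfixpow : ∀ (g : Equiv.Perm K) (x : K), g x = x → ∀ n, (g ^ n) x = x := by
    intro g x hgx n
    induction n with
    | zero => simp
    | succ n ih => rw [pow_succ, Equiv.Perm.mul_apply, hgx, ih]
  -- every irredundant base has length 2
  have hlen2 : ∀ l : List K, IsIrredundantBaseOn G {v : K | v ≠ 0} l → l.length = 2 := by
    rintro (_ | ⟨a, _ | ⟨b, _ | ⟨d, t⟩⟩⟩) ⟨⟨hmem, hirr⟩, hbase⟩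
    · -- nil
      exfalso
      have hφ1 : φ = 1 := hbase φ hφG (fun x hx => absurd hx List.not_mem_nil)
      obtain ⟨x, hx⟩ := hfrob_ne
      apply hx
      rw [← hφ x, hφ1, Equiv.Perm.one_apply]
    · -- [a]
      exfalso
      have ha : a ≠ 0 := hmem a (by simp)
      obtain ⟨j0, hj0⟩ := hstab a ha
      have hhG : M ^ j0 * φ ∈ G := by
        have := hujG 1 j0; rwa [pow_one] at this
      have hha : (M ^ j0 * φ) a = a := by
        rw [Equiv.Perm.mul_apply, hφ, hMpow]; exact hj0
      have h1 : M ^ j0 * φ = 1 := by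
        apply hbase _ hhG
        intro x hx
        simp only [List.mem_singleton] at hx
        subst hx
        rw [Equiv.Perm.smul_def, hha]
      obtain ⟨x, hx⟩ := hfrob_ne
      have happ : ∀ y : K, c ^ j0 * y ^ q = y := by
        intro y
        have h2 := congrArg (fun f : Equiv.Perm K => f y) h1
        simpa [Equiv.Perm.mul_apply, hφ, hMpow] using h2
      have hc0 : c ^ j0 = 1 := by simpa using happ 1
      have h3 := happ x
      rw [hc0, one_mul] at h3
      exact hx h3
    · rfl
    · -- a :: b :: d :: t
      exfalso
      have ha : a ≠ 0 := hmem a (by simp)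
      obtain ⟨g, hgG, hgfix, hgmove⟩ := hirr 2 (by simp only [List.length_cons]; omega)
      obtain ⟨g1, hg1G, hg1fix, hg1move⟩ := hirr 1 (by simp only [List.length_cons]; omega)
      have hga : g a = a := by
        have := hgfix a (by simp)
        rwa [Equiv.Perm.smul_def] at this
      have hgb : g b = b := by
        have := hgfix b (by simp)
        rwa [Equiv.Perm.smul_def] at this
      have hg1a : g1 a = a := by
        have := hg1fix a (by simp)
        rwa [Equiv.Perm.smul_def] at this
      obtain ⟨i, j, hgf⟩ := hG_forms g hgG
      obtain ⟨i1, j1, hg1f⟩ := hG_forms g1 hg1G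
      obtain ⟨j0, hj0⟩ := hstab a ha
      set h : Equiv.Perm K := M ^ j0 * φ with hh
      have hhform : ∀ n : ℕ, ∃ tt, ∀ x : K, (h ^ n) x = c ^ tt * x ^ q ^ n := hstabpow j0
      have hha : h a = a := by
        rw [hh, Equiv.Perm.mul_apply, hφ, hMpow]; exact hj0
      have hhpa : ∀ n, (h ^ n) a = a := hfixpow h a hha
      have hhr : h ^ r = 1 := by
        obtain ⟨tt, htt⟩ := hhform r
        exact huniq a ha (h ^ r) 1 r tt 0 0 htt (fun x => by simp)
          (by simp) (hhpa r) (by simp)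
      have hgeq : g = h ^ i := by
        obtain ⟨tt, htt⟩ := hhform i
        exact huniq a ha g (h ^ i) i j i tt hgf htt rfl hga (hhpa i)
      have hg1eq : g1 = h ^ i1 := by
        obtain ⟨tt, htt⟩ := hhform i1
        exact huniq a ha g1 (h ^ i1) i1 j1 i1 tt hg1f htt rfl hg1a (hhpa i1)
      have hhb : h b ≠ b := by
        intro hfix
        apply hg1move
        have hbget : (a :: b :: d :: t).get ⟨1, by simp only [List.length_cons]; omega⟩ = b := rfl
        rw [Equiv.Perm.smul_def, hg1eq]
        show (h ^ i1) b = b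
        exact hfixpow h b hfix i1
      have hrdvd : r ∣ i := by
        by_contra hnd
        have hcop : r.Coprime i := (Nat.Prime.coprime_iff_not_dvd hr).mpr hnd
        obtain ⟨k, -, hk⟩ := Nat.exists_mul_mod_eq_one_of_coprime hcop.symm (by omega)
        have hb1 : (h ^ (i * k)) b = b := by
          rw [pow_mul]
          refine hfixpow _ b ?_ k
          rw [← hgeq]; exact hgb
        have hred : h ^ (i * k) = h := by
          conv_lhs => rw [← Nat.mod_add_div (i * k) r]
          rw [pow_add, pow_mul, hhr, one_pow, mul_one, hk, pow_one]
        rw [hred] at hb1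
        exact hhb hb1
      obtain ⟨s, rfl⟩ := hrdvd
      have hgone : g = 1 := by rw [hgeq, pow_mul, hhr, one_pow]
      apply hgmove
      rw [Equiv.Perm.smul_def, hgone, Equiv.Perm.one_apply]
  refine ⟨hcard, ?_, ?_⟩
  · rw [hcard]
    exact hodd.mul hmodd
  · intro l1 l2 h1 h2
    rw [hlen2 l1 h1, hlen2 l2 h2]
end

section
/- Let r = 2^b − 1 be a Mersenne prime, let N be the Singer subgroup of Γ(r^2) and O_2(N) its Sylow 2-subgroup (cyclic of order 2^{b+1}). Set P_1 = O_2(N)⟨φ⟩ and P_2 = (O_2(N))^2⟨φ⟩, where (O_2(N))^2 is the subgroup of squares in O_2(N). Then P_1 is semidihedral of order 2^{b+2} and P_2 is dihedral of order 2^{b+1}; and for every subgroup G = PC ≤ Γ(r^2) with P ∈ {P_1, P_2} and C ≤ O_2(N), the group G is an irreducible nilpotent subgroup of GL(2, r) that is IBIS on GF(r^2) \ {0} with b(G) = 2. -/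
open Pointwise

section O2

/-- The Sylow `2`-subgroup `O₂(N)` of the Singer subgroup `N` of `Γ(r²)`, `r = 2^b - 1`
a Mersenne prime: all maps `x ↦ ax` with `a` of `2`-power order dividing `2^(b+1)`. -/
def O2Singer (K : Type*) [Field K] (b : ℕ) : Subgroup (Equiv.Perm K) where
  carrier := {f | ∃ a : K, a ^ 2 ^ (b + 1) = 1 ∧ ∀ x, f x = a * x}
  one_mem' := ⟨1, one_pow _, fun x => (one_mul x).symm⟩
  mul_mem' := by
    rintro f g ⟨a, ha1, ha⟩ ⟨c, hc1, hc⟩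
    exact ⟨a * c, by rw [mul_pow, ha1, hc1, one_mul],
      fun x => by simp [Equiv.Perm.mul_apply, ha, hc, mul_assoc]⟩
  inv_mem' := by
    rintro f ⟨a, ha1, ha⟩
    have ha0 : a ≠ 0 := by
      intro h
      rw [h, zero_pow (Nat.pos_of_ne_zero ?_).ne'] at ha1
      · exact zero_ne_one ha1
      · exact (Nat.two_pow_pos (b + 1)).ne'
    refine ⟨a⁻¹, by rw [inv_pow, ha1, inv_one], fun x => ?_⟩
    rw [Equiv.Perm.inv_def, Equiv.symm_apply_eq, ha]
    exact (mul_inv_cancel_left₀ ha0 x).symm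

/-- The subgroup `(O₂(N))²` of squares of elements of `O₂(N)`. -/
def O2SingerSq (K : Type*) [Field K] (b : ℕ) : Subgroup (Equiv.Perm K) where
  carrier := {f | ∃ a : K, a ^ 2 ^ (b + 1) = 1 ∧ ∀ x, f x = a ^ 2 * x}
  one_mem' := ⟨1, one_pow _, fun x => by simp⟩
  mul_mem' := by
    rintro f g ⟨a, ha1, ha⟩ ⟨c, hc1, hc⟩
    exact ⟨a * c, by rw [mul_pow, ha1, hc1, one_mul],
      fun x => by simp [Equiv.Perm.mul_apply, ha, hc, mul_pow, mul_assoc]⟩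
  inv_mem' := by
    rintro f ⟨a, ha1, ha⟩
    have ha0 : a ≠ 0 := by
      intro h
      rw [h, zero_pow (Nat.two_pow_pos (b + 1)).ne'] at ha1
      exact zero_ne_one ha1
    refine ⟨a⁻¹, by rw [inv_pow, ha1, inv_one], fun x => ?_⟩
    rw [Equiv.Perm.inv_def, Equiv.symm_apply_eq, ha, inv_pow]
    exact (mul_inv_cancel_left₀ (pow_ne_zero 2 ha0) x).symm

/-- `H` is a semidihedral group of order `2^k`. -/
def IsSemidihedralOfOrder (H : Type*) [Group H] (k : ℕ) : Prop :=
  Nat.card H = 2 ^ k ∧ ∃ x y : H, orderOf x = 2 ^ (k - 1) ∧ orderOf y = 2 ∧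
    y * x * y⁻¹ = x ^ (2 ^ (k - 2) - 1) ∧ Subgroup.closure {x, y} = ⊤

end O2


section AuxPart1

lemma aux_mersenne_two_le {b r : ℕ} (hr : r.Prime) (hrb : r = 2 ^ b - 1) : 2 ≤ b := by
  by_contra h
  interval_cases b
  · rw [hrb] at hr; norm_num at hr
  · rw [hrb] at hr; norm_num at hr

lemma aux_mersenne_succ {b r : ℕ} (hrb : r = 2 ^ b - 1) : r + 1 = 2 ^ b := by
  have h1 : 1 ≤ 2 ^ b := Nat.one_le_two_pow
  omega

lemma aux_card_dvd {b r : ℕ} (hr : r.Prime) (hrb : r = 2 ^ b - 1) :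
    r * r - 1 = 2 ^ (b + 1) * (2 ^ (b - 1) - 1) := by
  have hb := aux_mersenne_two_le hr hrb
  have h1 : r + 1 = 2 ^ b := aux_mersenne_succ hrb
  have h2 : 2 ^ b = 2 * 2 ^ (b - 1) := by
    conv_lhs => rw [show b = (b - 1) + 1 by omega]
    rw [pow_succ]; ring
  have h3 : 2 ^ (b + 1) = 2 * 2 ^ b := by rw [pow_succ]; ring
  have h4 : 2 ≤ 2 ^ (b - 1) := by
    calc 2 = 2 ^ 1 := rfl
    _ ≤ 2 ^ (b - 1) := Nat.pow_le_pow_right (by norm_num) (by omega)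
  obtain ⟨m, hm⟩ : ∃ m, 2 ^ (b - 1) = m + 2 := ⟨2 ^ (b - 1) - 2, by omega⟩
  have hr2 : r = 2 * m + 3 := by omega
  rw [hr2, h3, h2, hm]
  rw [show (2 * m + 3) * (2 * m + 3) = 2 * (2 * (m + 2)) * (m + 2 - 1) + 1 by
    have : m + 2 - 1 = m + 1 := rfl
    rw [this]; ring, Nat.add_sub_cancel]

lemma aux_exists_orderOf {G : Type*} [Group G] [Fintype G] [IsCyclic G] {d : ℕ}
    (hd : d ∣ Fintype.card G) : ∃ g : G, orderOf g = d := by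
  obtain ⟨g, hg⟩ := IsCyclic.exists_generator (α := G)
  have hog : orderOf g = Fintype.card G := by
    rw [orderOf_eq_card_of_forall_mem_zpowers hg, Nat.card_eq_fintype_card]
  refine ⟨g ^ (Fintype.card G / d), ?_⟩
  rw [orderOf_pow, hog, Nat.gcd_eq_right (Nat.div_dvd_of_dvd hd),
    Nat.div_div_self hd Fintype.card_ne_zero]

lemma aux_roots_eq_pow {K : Type*} [Field K] [Fintype K] {z : K} {d : ℕ} (hd : 0 < d)
    (hz : orderOf z = d) {c : K} (hc : c ^ d = 1) : ∃ k < d, c = z ^ k := by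
  classical
  set T : Finset K := (Finset.range d).image (z ^ ·) with hT
  have hTcard : T.card = d := by
    rw [hT, Finset.card_image_of_injOn, Finset.card_range]
    intro i hi j hj hij
    exact pow_injOn_Iio_orderOf (by simpa [hz] using Finset.mem_range.mp hi)
      (by simpa [hz] using Finset.mem_range.mp hj) hij
  have hsub : T ⊆ Polynomial.nthRootsFinset d (1 : K) := by
    intro x hx
    obtain ⟨k, _, rfl⟩ := Finset.mem_image.mp hx
    rw [Polynomial.mem_nthRootsFinset hd, ← pow_mul, mul_comm, pow_mul, ← hz,
      pow_orderOf_eq_one, one_pow]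
  have hcardle : (Polynomial.nthRootsFinset d (1 : K)).card ≤ d := by
    rw [Polynomial.nthRootsFinset_def]
    exact le_trans (Multiset.toFinset_card_le _) (Polynomial.card_nthRoots d 1)
  have hEq : T = Polynomial.nthRootsFinset d (1 : K) :=
    Finset.eq_of_subset_of_card_le hsub (by omega)
  have : c ∈ T := by rw [hEq, Polynomial.mem_nthRootsFinset hd]; exact hc
  obtain ⟨k, hk, hk2⟩ := Finset.mem_image.mp this
  exact ⟨k, Finset.mem_range.mp hk, hk2.symm⟩

end AuxPart1

section AuxPart2
variable {K : Type*} [Field K] [Fintype K]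

omit [Fintype K] in
lemma aux_ne_zero {a : K} {n : ℕ} (hn : n ≠ 0) (h : a ^ n = 1) : a ≠ 0 := by
  intro h0; rw [h0, zero_pow hn] at h; exact zero_ne_one h

omit [Fintype K] in
lemma aux_pow_pow {a : K} {E : ℕ} (h : a ^ E = 1) (m : ℕ) : (a ^ m) ^ E = 1 := by
  rw [pow_right_comm, h, one_pow]

omit [Fintype K] in
lemma aux_inv_pow {a : K} {E : ℕ} (h : a ^ E = 1) : a⁻¹ ^ E = 1 := by
  rw [inv_pow, h, inv_one]

/-- The subgroup of all maps `x ↦ a x` or `x ↦ a x^r` with `a` of 2-power order. -/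
def auxP1Grp (K : Type*) [Field K] [Fintype K] (b r : ℕ) (hpow : ∀ x : K, x ^ (r * r) = x) :
    Subgroup (Equiv.Perm K) where
  carrier := {f | ∃ a : K, a ^ 2 ^ (b + 1) = 1 ∧
    ((∀ x, f x = a * x) ∨ (∀ x, f x = a * x ^ r))}
  one_mem' := ⟨1, one_pow _, Or.inl fun x => (one_mul x).symm⟩
  mul_mem' := by
    rintro f g ⟨a, ha1, ha | ha⟩ ⟨c, hc1, hc | hc⟩
    · exact ⟨a * c, by rw [mul_pow, ha1, hc1, one_mul],
        Or.inl fun x => by simp [Equiv.Perm.mul_apply, ha, hc, mul_assoc]⟩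
    · exact ⟨a * c, by rw [mul_pow, ha1, hc1, one_mul],
        Or.inr fun x => by simp [Equiv.Perm.mul_apply, ha, hc, mul_assoc]⟩
    · refine ⟨a * c ^ r, by rw [mul_pow, ha1, one_mul, aux_pow_pow hc1], Or.inr fun x => ?_⟩
      simp only [Equiv.Perm.mul_apply, ha, hc, mul_pow, mul_assoc]
    · refine ⟨a * c ^ r, by rw [mul_pow, ha1, one_mul, aux_pow_pow hc1], Or.inl fun x => ?_⟩
      simp only [Equiv.Perm.mul_apply, ha, hc, mul_pow, ← pow_mul, hpow x, mul_assoc]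
  inv_mem' := by
    rintro f ⟨a, ha1, ha | ha⟩
    · have ha0 : a ≠ 0 := aux_ne_zero (Nat.two_pow_pos _).ne' ha1
      refine ⟨a⁻¹, aux_inv_pow ha1, Or.inl fun x => ?_⟩
      rw [Equiv.Perm.inv_def, Equiv.symm_apply_eq, ha]
      exact (mul_inv_cancel_left₀ ha0 x).symm
    · have ha0 : a ≠ 0 := aux_ne_zero (Nat.two_pow_pos _).ne' ha1
      refine ⟨a⁻¹ ^ r, aux_pow_pow (aux_inv_pow ha1) r, Or.inr fun x => ?_⟩
      rw [Equiv.Perm.inv_def, Equiv.symm_apply_eq, ha, mul_pow, ← pow_mul, ← pow_mul,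
        hpow x, inv_pow, hpow a, mul_inv_cancel_left₀ ha0]

def auxP2Grp (K : Type*) [Field K] [Fintype K] (b r : ℕ) (hpow : ∀ x : K, x ^ (r * r) = x) :
    Subgroup (Equiv.Perm K) where
  carrier := {f | ∃ a : K, a ^ 2 ^ (b + 1) = 1 ∧
    ((∀ x, f x = a ^ 2 * x) ∨ (∀ x, f x = a ^ 2 * x ^ r))}
  one_mem' := ⟨1, one_pow _, Or.inl fun x => by simp⟩
  mul_mem' := by
    rintro f g ⟨a, ha1, ha | ha⟩ ⟨c, hc1, hc | hc⟩
    · exact ⟨a * c, by rw [mul_pow, ha1, hc1, one_mul],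
        Or.inl fun x => by simp [Equiv.Perm.mul_apply, ha, hc, mul_pow, mul_assoc]⟩
    · exact ⟨a * c, by rw [mul_pow, ha1, hc1, one_mul],
        Or.inr fun x => by simp [Equiv.Perm.mul_apply, ha, hc, mul_pow, mul_assoc]⟩
    · refine ⟨a * c ^ r, by rw [mul_pow, ha1, one_mul, aux_pow_pow hc1], Or.inr fun x => ?_⟩
      simp only [Equiv.Perm.mul_apply, ha, hc, mul_pow, mul_assoc]
      rw [pow_right_comm]
    · refine ⟨a * c ^ r, by rw [mul_pow, ha1, one_mul, aux_pow_pow hc1], Or.inl fun x => ?_⟩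
      simp only [Equiv.Perm.mul_apply, ha, hc, mul_pow, mul_assoc, ← pow_mul, hpow x]
      rw [show 2 * r = r * 2 by ring]
  inv_mem' := by
    rintro f ⟨a, ha1, ha | ha⟩
    · have ha0 : (a : K) ^ 2 ≠ 0 := pow_ne_zero 2 (aux_ne_zero (Nat.two_pow_pos _).ne' ha1)
      refine ⟨a⁻¹, aux_inv_pow ha1, Or.inl fun x => ?_⟩
      rw [Equiv.Perm.inv_def, Equiv.symm_apply_eq, ha, inv_pow]
      exact (mul_inv_cancel_left₀ ha0 x).symm
    · have ha0' : a ≠ 0 := aux_ne_zero (Nat.two_pow_pos _).ne' ha1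
      have ha2 : (a : K) ^ 2 ≠ 0 := pow_ne_zero 2 ha0'
      have hA : ((a⁻¹ ^ r) ^ 2) ^ r = (a ^ 2)⁻¹ := by
        rw [← pow_mul, ← pow_mul, show r * (2 * r) = r * r * 2 by ring, pow_mul,
          inv_pow, hpow a, inv_pow]
      refine ⟨a⁻¹ ^ r, aux_pow_pow (aux_inv_pow ha1) r, Or.inr fun x => ?_⟩
      rw [Equiv.Perm.inv_def, Equiv.symm_apply_eq, ha, mul_pow, hA, ← pow_mul, hpow x,
        mul_inv_cancel_left₀ ha2]

lemma aux_mem_P1 {b r : ℕ} (hpow : ∀ x : K, x ^ (r * r) = x)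
    {φ : Equiv.Perm K} (hφ : ∀ x, φ x = x ^ r) {f : Equiv.Perm K} :
    f ∈ O2Singer K b ⊔ Subgroup.closure {φ} ↔
      ∃ a : K, a ^ 2 ^ (b + 1) = 1 ∧
        ((∀ x, f x = a * x) ∨ (∀ x, f x = a * x ^ r)) := by
  constructor
  · intro hf
    refine (sup_le (fun g hg => ?_) (fun g hg => ?_) : _ ≤ auxP1Grp K b r hpow) hf
    · obtain ⟨a, h1, h2⟩ := hg
      exact ⟨a, h1, Or.inl h2⟩
    · refine (Subgroup.closure_le _).mpr ?_ hg
      rintro g rfl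
      exact ⟨1, one_pow _, Or.inr fun x => by rw [hφ, one_mul]⟩
  · rintro ⟨a, h1, h2 | h2⟩
    · exact Subgroup.mem_sup_left ⟨a, h1, h2⟩
    · have hm : f * φ⁻¹ ∈ O2Singer K b := by
        refine ⟨a, h1, fun x => ?_⟩
        rw [Equiv.Perm.mul_apply, h2, ← hφ, Equiv.Perm.inv_def, Equiv.apply_symm_apply]
      have : f = (f * φ⁻¹) * φ := by group
      rw [this]
      exact mul_mem (Subgroup.mem_sup_left hm)
        (Subgroup.mem_sup_right (Subgroup.subset_closure rfl))

lemma aux_mem_P2 {b r : ℕ} (hpow : ∀ x : K, x ^ (r * r) = x)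
    {φ : Equiv.Perm K} (hφ : ∀ x, φ x = x ^ r) {f : Equiv.Perm K} :
    f ∈ O2SingerSq K b ⊔ Subgroup.closure {φ} ↔
      ∃ a : K, a ^ 2 ^ (b + 1) = 1 ∧
        ((∀ x, f x = a ^ 2 * x) ∨ (∀ x, f x = a ^ 2 * x ^ r)) := by
  constructor
  · intro hf
    refine (sup_le (fun g hg => ?_) (fun g hg => ?_) : _ ≤ auxP2Grp K b r hpow) hf
    · obtain ⟨a, h1, h2⟩ := hg
      exact ⟨a, h1, Or.inl h2⟩
    · refine (Subgroup.closure_le _).mpr ?_ hg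
      rintro g rfl
      exact ⟨1, one_pow _, Or.inr fun x => by rw [hφ, one_pow, one_mul]⟩
  · rintro ⟨a, h1, h2 | h2⟩
    · exact Subgroup.mem_sup_left ⟨a, h1, h2⟩
    · have hm : f * φ⁻¹ ∈ O2SingerSq K b := by
        refine ⟨a, h1, fun x => ?_⟩
        rw [Equiv.Perm.mul_apply, h2, ← hφ, Equiv.Perm.inv_def, Equiv.apply_symm_apply]
      have : f = (f * φ⁻¹) * φ := by group
      rw [this]
      exact mul_mem (Subgroup.mem_sup_left hm)
        (Subgroup.mem_sup_right (Subgroup.subset_closure rfl))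

end AuxPart2

section AuxPart3
variable {K : Type*} [Field K] [Fintype K]

lemma aux_exists_zeta (b : ℕ) (hdvd : 2 ^ (b + 1) ∣ Fintype.card K - 1) :
    ∃ ζ : K, orderOf ζ = 2 ^ (b + 1) := by
  classical
  have h : 2 ^ (b + 1) ∣ Fintype.card Kˣ := by rwa [Fintype.card_units]
  obtain ⟨u, hu⟩ := aux_exists_orderOf h
  exact ⟨(u : K), by rw [orderOf_units, hu]⟩

lemma aux_mulPerm_eq {a : K} (ha : a ≠ 0) :
    mulPerm a ha = MulAction.toPermHom Kˣ K (Units.mk0 a ha) :=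
  Equiv.ext fun _ => rfl

@[simp] lemma aux_mulPerm_apply {a : K} (ha : a ≠ 0) (x : K) : mulPerm a ha x = a * x := rfl

lemma aux_toPermHom_inj : Function.Injective (MulAction.toPermHom Kˣ K) :=
  fun _ _ h => MulAction.toPerm_injective h

lemma aux_orderOf_mulPerm {a : K} (ha : a ≠ 0) : orderOf (mulPerm a ha) = orderOf a := by
  rw [aux_mulPerm_eq ha, orderOf_injective _ aux_toPermHom_inj, ← orderOf_units, Units.val_mk0]

lemma aux_mulPerm_pow {a : K} (ha : a ≠ 0) (n : ℕ) :
    (mulPerm a ha) ^ n = mulPerm (a ^ n) (pow_ne_zero n ha) := by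
  rw [aux_mulPerm_eq ha, ← map_pow, aux_mulPerm_eq (pow_ne_zero n ha)]
  congr 1
  ext
  simp

lemma aux_mulPerm_mul {a c : K} (ha : a ≠ 0) (hc : c ≠ 0) :
    mulPerm a ha * mulPerm c hc = mulPerm (a * c) (mul_ne_zero ha hc) :=
  Equiv.ext fun x => by simp [Equiv.Perm.mul_apply, mul_assoc]

end AuxPart3

section AuxPart4
variable {K : Type*} [Field K] [Fintype K] {b r : ℕ} {φ : Equiv.Perm K} {ζ : K}

omit [Fintype K] in
lemma aux_zeta_ne_zero (hζ : orderOf ζ = 2 ^ (b + 1)) : ζ ≠ 0 :=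
  aux_ne_zero (n := 2 ^ (b + 1)) (Nat.two_pow_pos _).ne'
    (hζ ▸ pow_orderOf_eq_one ζ)

omit [Fintype K] in
lemma aux_nofix (hb : 2 ≤ b) (hr1 : r + 1 = 2 ^ b) (hζ : orderOf ζ = 2 ^ (b + 1)) :
    ζ ^ r ≠ ζ := by
  intro h
  set u : Kˣ := Units.mk0 ζ (aux_zeta_ne_zero hζ) with hu
  have hou : orderOf u = 2 ^ (b + 1) := by rw [← orderOf_units, hu, Units.val_mk0, hζ]
  have h1 : u ^ r = u ^ 1 := by
    ext; rw [Units.val_pow_eq_pow_val, pow_one, hu, Units.val_mk0, h]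
  have hm := pow_eq_pow_iff_modEq.mp h1
  rw [hou] at hm
  have h4 : (4 : ℕ) ≤ 2 ^ b := by
    calc (4 : ℕ) = 2 ^ 2 := rfl
    _ ≤ 2 ^ b := Nat.pow_le_pow_right (by norm_num) hb
  have h2 : 2 ^ (b + 1) = 2 * 2 ^ b := by rw [pow_succ]; ring
  have hdvd : 2 ^ (b + 1) ∣ r - 1 := (Nat.modEq_iff_dvd' (by omega)).mp hm.symm
  have := Nat.le_of_dvd (by omega) hdvd
  omega

lemma aux_phi_phi (hpow : ∀ x : K, x ^ (r * r) = x) (hφ : ∀ x, φ x = x ^ r) : φ * φ = 1 :=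
  Equiv.ext fun x => by
    simp only [Equiv.Perm.mul_apply, hφ, ← pow_mul, hpow x, Equiv.Perm.one_apply]

omit [Fintype K] in
lemma aux_phi_ne_one (hb : 2 ≤ b) (hr1 : r + 1 = 2 ^ b) (hζ : orderOf ζ = 2 ^ (b + 1))
    (hφ : ∀ x, φ x = x ^ r) : φ ≠ 1 := by
  intro h
  exact aux_nofix hb hr1 hζ (by rw [← hφ ζ, h, Equiv.Perm.one_apply])

lemma aux_orderOf_zetasq (hζ : orderOf ζ = 2 ^ (b + 1)) : orderOf (ζ ^ 2) = 2 ^ b := by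
  set u : Kˣ := Units.mk0 ζ (aux_zeta_ne_zero hζ) with hu
  have hou : orderOf u = 2 ^ (b + 1) := by rw [← orderOf_units, hu, Units.val_mk0, hζ]
  have : ζ ^ 2 = ((u ^ 2 : Kˣ) : K) := by rw [Units.val_pow_eq_pow_val, hu, Units.val_mk0]
  rw [this, orderOf_units, orderOf_pow, hou, Nat.gcd_comm,
    Nat.gcd_eq_left (dvd_pow_self 2 (Nat.succ_ne_zero b)),
    pow_succ, Nat.mul_div_cancel _ (by norm_num)]

lemma aux_P1_elts (hpow : ∀ x : K, x ^ (r * r) = x) (hφ : ∀ x, φ x = x ^ r)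
    (hζ : orderOf ζ = 2 ^ (b + 1)) {f : Equiv.Perm K}
    (hf : f ∈ O2Singer K b ⊔ Subgroup.closure {φ}) :
    ∃ k < 2 ^ (b + 1), ∃ ε < 2,
      f = mulPerm (ζ ^ k) (pow_ne_zero k (aux_zeta_ne_zero hζ)) * φ ^ ε := by
  obtain ⟨a, h1, h2 | h2⟩ := (aux_mem_P1 hpow hφ).mp hf
  all_goals
    obtain ⟨k, hk, rfl⟩ := aux_roots_eq_pow (Nat.two_pow_pos _) hζ h1
  · exact ⟨k, hk, 0, by norm_num, Equiv.ext fun x => by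
      simp [h2 x, Equiv.Perm.mul_apply]⟩
  · exact ⟨k, hk, 1, by norm_num, Equiv.ext fun x => by
      simp [h2 x, Equiv.Perm.mul_apply, hφ]⟩

lemma aux_P2_elts (hpow : ∀ x : K, x ^ (r * r) = x) (hφ : ∀ x, φ x = x ^ r)
    (hζ : orderOf ζ = 2 ^ (b + 1)) {f : Equiv.Perm K}
    (hf : f ∈ O2SingerSq K b ⊔ Subgroup.closure {φ}) :
    ∃ k < 2 ^ b, ∃ ε < 2,
      f = mulPerm ((ζ ^ 2) ^ k) (pow_ne_zero k (pow_ne_zero 2 (aux_zeta_ne_zero hζ))) * φ ^ ε := by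
  obtain ⟨a, h1, h2 | h2⟩ := (aux_mem_P2 hpow hφ).mp hf
  all_goals
    have h1' : (a ^ 2) ^ 2 ^ b = 1 := by
      rw [← pow_mul, show 2 * 2 ^ b = 2 ^ (b + 1) by rw [pow_succ]; ring, h1]
    obtain ⟨k, hk, hak⟩ := aux_roots_eq_pow (Nat.two_pow_pos _) (aux_orderOf_zetasq hζ) h1'
  · exact ⟨k, hk, 0, by norm_num, Equiv.ext fun x => by
      simp [h2 x, hak, Equiv.Perm.mul_apply]⟩
  · exact ⟨k, hk, 1, by norm_num, Equiv.ext fun x => by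
      simp [h2 x, hak, Equiv.Perm.mul_apply, hφ]⟩

lemma aux_mem_O2 (hζ : orderOf ζ = 2 ^ (b + 1)) (k : ℕ) :
    mulPerm (ζ ^ k) (pow_ne_zero k (aux_zeta_ne_zero hζ)) ∈ O2Singer K b :=
  ⟨ζ ^ k, aux_pow_pow (hζ ▸ pow_orderOf_eq_one ζ) k, fun _ => rfl⟩

lemma aux_mem_O2Sq (hζ : orderOf ζ = 2 ^ (b + 1)) (k : ℕ) :
    mulPerm ((ζ ^ 2) ^ k) (pow_ne_zero k (pow_ne_zero 2 (aux_zeta_ne_zero hζ))) ∈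
      O2SingerSq K b :=
  ⟨ζ ^ k, aux_pow_pow (hζ ▸ pow_orderOf_eq_one ζ) k,
    fun x => by rw [aux_mulPerm_apply, pow_right_comm]⟩

end AuxPart4

section AuxPart5
variable {K : Type*} [Field K] [Fintype K] {b r : ℕ} {φ : Equiv.Perm K} {ζ : K}

lemma aux_phi_pow_one (hφ : ∀ x : K, φ x = x ^ r) (e : ℕ) : (φ ^ e) (1 : K) = 1 := by
  induction e with
  | zero => simp
  | succ n ih => rw [pow_succ, Equiv.Perm.mul_apply, hφ, one_pow, ih]

lemma aux_mulPerm_phi_inj (hb : 2 ≤ b) (hr1 : r + 1 = 2 ^ b)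
    (hζ : orderOf ζ = 2 ^ (b + 1)) (hφ : ∀ x, φ x = x ^ r)
    {k k' ε ε' : ℕ} (hk : k < 2 ^ (b + 1)) (hk' : k' < 2 ^ (b + 1)) (hε : ε < 2) (hε' : ε' < 2)
    (h : mulPerm (ζ ^ k) (pow_ne_zero k (aux_zeta_ne_zero hζ)) * φ ^ ε
       = mulPerm (ζ ^ k') (pow_ne_zero k' (aux_zeta_ne_zero hζ)) * φ ^ ε') :
    k = k' ∧ ε = ε' := by
  have hζ0 := aux_zeta_ne_zero hζ
  have happ : ∀ x : K, ζ ^ k * (φ ^ ε) x = ζ ^ k' * (φ ^ ε') x := by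
    intro x
    have := Equiv.ext_iff.mp h x
    simpa [Equiv.Perm.mul_apply] using this
  have h1 : ζ ^ k = ζ ^ k' := by
    have := happ 1
    rwa [aux_phi_pow_one hφ, aux_phi_pow_one hφ, mul_one, mul_one] at this
  have hkk : k = k' :=
    pow_injOn_Iio_orderOf (x := ζ) (by rw [hζ]; exact hk) (by rw [hζ]; exact hk') h1
  refine ⟨hkk, ?_⟩
  have h2 : ∀ x : K, (φ ^ ε) x = (φ ^ ε') x := by
    intro x
    have := happ x
    rw [h1] at this
    exact mul_left_cancel₀ (pow_ne_zero k' hζ0) this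
  have h3 := h2 ζ
  interval_cases ε <;> interval_cases ε'
  · rfl
  · exfalso
    simp only [pow_zero, pow_one, Equiv.Perm.one_apply, hφ] at h3
    exact aux_nofix hb hr1 hζ h3.symm
  · exfalso
    simp only [pow_zero, pow_one, Equiv.Perm.one_apply, hφ] at h3
    exact aux_nofix hb hr1 hζ h3
  · rfl

end AuxPart5

section AuxPart6
variable {K : Type*} [Field K] [Fintype K] {b r : ℕ} {φ : Equiv.Perm K} {ζ : K}

lemma aux_phi_mem_P1 : φ ∈ O2Singer K b ⊔ Subgroup.closure {φ} :=
  Subgroup.mem_sup_right (Subgroup.subset_closure rfl)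

lemma aux_phi_mem_P2 : φ ∈ O2SingerSq K b ⊔ Subgroup.closure {φ} :=
  Subgroup.mem_sup_right (Subgroup.subset_closure rfl)

lemma aux_card_P1 (hb : 2 ≤ b) (hr1 : r + 1 = 2 ^ b) (hpow : ∀ x : K, x ^ (r * r) = x)
    (hφ : ∀ x, φ x = x ^ r) (hζ : orderOf ζ = 2 ^ (b + 1)) :
    Nat.card ↥(O2Singer K b ⊔ Subgroup.closure {φ}) = 2 ^ (b + 2) := by
  set P1 := O2Singer K b ⊔ Subgroup.closure {φ} with hP1
  have hζ0 := aux_zeta_ne_zero hζ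
  set e : Fin (2 ^ (b + 1)) × Fin 2 → ↥P1 := fun p =>
    ⟨mulPerm (ζ ^ (p.1 : ℕ)) (pow_ne_zero _ hζ0) * φ ^ (p.2 : ℕ),
      mul_mem (Subgroup.mem_sup_left (aux_mem_O2 hζ _)) (pow_mem aux_phi_mem_P1 _)⟩ with he
  have hbij : Function.Bijective e := by
    constructor
    · rintro ⟨k, ε⟩ ⟨k', ε'⟩ hee
      have := Subtype.ext_iff.mp hee
      simp only [he] at this
      obtain ⟨h1, h2⟩ := aux_mulPerm_phi_inj hb hr1 hζ hφ k.is_lt k'.is_lt ε.is_lt ε'.is_lt this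
      exact Prod.ext (Fin.ext h1) (Fin.ext h2)
    · rintro ⟨f, hf⟩
      obtain ⟨k, hk, ε, hε, rfl⟩ := aux_P1_elts hpow hφ hζ hf
      exact ⟨(⟨k, hk⟩, ⟨ε, hε⟩), rfl⟩
  have := Nat.card_eq_of_bijective e hbij
  rw [← this]
  simp [Nat.card_eq_fintype_card]
  ring

lemma aux_semidihedral (hb : 2 ≤ b) (hr1 : r + 1 = 2 ^ b) (hpow : ∀ x : K, x ^ (r * r) = x)
    (hφ : ∀ x, φ x = x ^ r) (hζ : orderOf ζ = 2 ^ (b + 1)) :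
    IsSemidihedralOfOrder ↥(O2Singer K b ⊔ Subgroup.closure {φ}) (b + 2) := by
  have hζ0 := aux_zeta_ne_zero hζ
  set P1 := O2Singer K b ⊔ Subgroup.closure {φ} with hP1
  set x : ↥P1 := ⟨mulPerm ζ hζ0, Subgroup.mem_sup_left (by
    simpa using aux_mem_O2 (b := b) hζ 1)⟩ with hx
  set y : ↥P1 := ⟨φ, aux_phi_mem_P1⟩ with hy
  refine ⟨aux_card_P1 hb hr1 hpow hφ hζ, x, y, ?_, ?_, ?_, ?_⟩
  · rw [hx, Subgroup.orderOf_mk, aux_orderOf_mulPerm, hζ]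
    simp
  · have h2 : y * y = 1 := Subtype.ext (aux_phi_phi hpow hφ)
    have h1 : y ≠ 1 := fun hc =>
      aux_phi_ne_one hb hr1 hζ hφ (Subtype.ext_iff.mp hc)
    exact orderOf_eq_prime (by rw [pow_two]; exact h2) h1
  · -- relation
    have hyinv : (y⁻¹ : ↥P1) = y := by
      rw [inv_eq_iff_mul_eq_one]
      exact Subtype.ext (aux_phi_phi hpow hφ)
    rw [hyinv]
    apply Subtype.ext
    push_cast
    rw [aux_mulPerm_pow]
    apply Equiv.ext
    intro t
    simp only [hx, hy, Subgroup.coe_mk, Equiv.Perm.mul_apply, aux_mulPerm_apply, hφ]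
    rw [mul_pow, ← pow_mul, hpow t, show r = 2 ^ b - 1 by omega]
  · -- generation
    rw [eq_top_iff]
    rintro ⟨f, hf⟩ -
    obtain ⟨k, hk, ε, hε, rfl⟩ := aux_P1_elts hpow hφ hζ hf
    have hxy : (⟨mulPerm (ζ ^ k) (pow_ne_zero k hζ0) * φ ^ ε, hf⟩ : ↥P1)
        = x ^ k * y ^ ε := by
      apply Subtype.ext
      push_cast
      rw [aux_mulPerm_pow]
    rw [hxy]
    exact mul_mem (pow_mem (Subgroup.subset_closure (by simp)) k)
      (pow_mem (Subgroup.subset_closure (by simp)) ε)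

end AuxPart6

section AuxPart7
variable {K : Type*} [Field K] [Fintype K] {b r : ℕ} {φ : Equiv.Perm K} {ζ : K}

omit [Fintype K] in
lemma aux_zeta_pow_eq (hζ : orderOf ζ = 2 ^ (b + 1)) {s t : ℕ}
    (hst : s ≡ t [MOD 2 ^ (b + 1)]) : ζ ^ s = ζ ^ t := by
  set u : Kˣ := Units.mk0 ζ (aux_zeta_ne_zero hζ) with hu
  have hou : orderOf u = 2 ^ (b + 1) := by rw [← orderOf_units, hu, Units.val_mk0, hζ]
  have : u ^ s = u ^ t := pow_eq_pow_iff_modEq.mpr (by rw [hou]; exact hst)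
  calc ζ ^ s = ((u ^ s : Kˣ) : K) := by rw [Units.val_pow_eq_pow_val, hu, Units.val_mk0]
  _ = ((u ^ t : Kˣ) : K) := by rw [this]
  _ = ζ ^ t := by rw [Units.val_pow_eq_pow_val, hu, Units.val_mk0]

lemma aux_dihedral (hb : 2 ≤ b) (hr1 : r + 1 = 2 ^ b) (hpow : ∀ x : K, x ^ (r * r) = x)
    (hφ : ∀ x, φ x = x ^ r) (hζ : orderOf ζ = 2 ^ (b + 1)) :
    Nonempty (↥(O2SingerSq K b ⊔ Subgroup.closure {φ}) ≃* DihedralGroup (2 ^ b)) := by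
  have hζ0 := aux_zeta_ne_zero hζ
  haveI : NeZero (2 ^ b) := ⟨(Nat.two_pow_pos b).ne'⟩
  set P2 := O2SingerSq K b ⊔ Subgroup.closure {φ} with hP2
  have hζ20 : (ζ ^ 2 : K) ≠ 0 := pow_ne_zero 2 hζ0
  set X : ↥P2 := ⟨mulPerm (ζ ^ 2) hζ20, Subgroup.mem_sup_left (by
    simpa using aux_mem_O2Sq (b := b) hζ 1)⟩ with hX
  set Y : ↥P2 := ⟨φ, aux_phi_mem_P2⟩ with hY
  have hXord : orderOf X = 2 ^ b := by
    rw [hX, Subgroup.orderOf_mk, aux_orderOf_mulPerm, aux_orderOf_zetasq hζ]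
  have hY2 : Y * Y = 1 := Subtype.ext (aux_phi_phi hpow hφ)
  have hYinv : Y⁻¹ = Y := by rw [inv_eq_iff_mul_eq_one]; exact hY2
  have hXY2 : (X * Y) * (X * Y) = 1 := by
    have hperm : (mulPerm (ζ ^ 2) hζ20 * φ) * (mulPerm (ζ ^ 2) hζ20 * φ) = 1 := by
      apply Equiv.ext
      intro t
      simp only [Equiv.Perm.mul_apply, aux_mulPerm_apply, hφ, Equiv.Perm.one_apply]
      rw [mul_pow, ← pow_mul, ← pow_mul, hpow t, ← mul_assoc, ← pow_add]
      have hmodeq : 2 + 2 * r ≡ 0 [MOD 2 ^ (b + 1)] := by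
        have h2 : 2 + 2 * r = 2 ^ (b + 1) := by
          have : 2 ^ (b + 1) = 2 * 2 ^ b := by rw [pow_succ]; ring
          omega
        rw [h2]
        exact (Nat.modEq_zero_iff_dvd).mpr dvd_rfl
      calc ζ ^ (2 + 2 * r) * t = ζ ^ 0 * t := by rw [aux_zeta_pow_eq hζ hmodeq]
      _ = t := by rw [pow_zero, one_mul]
    exact Subtype.ext hperm
  have hXY : X * Y = Y * X⁻¹ := by
    have h1 : (X * Y)⁻¹ = X * Y := by rw [inv_eq_iff_mul_eq_one]; exact hXY2
    rw [← h1, mul_inv_rev, hYinv]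
  have hXnY : ∀ m : ℕ, X ^ m * Y = Y * (X ^ m)⁻¹ := by
    intro m
    induction m with
    | zero => simp
    | succ n ih =>
      rw [pow_succ, mul_assoc, hXY, ← mul_assoc, ih]
      group
  set pw : ZMod (2 ^ b) → ↥P2 := fun i => X ^ i.val with hpw
  have pw_add : ∀ i j, pw (i + j) = pw i * pw j := by
    intro i j
    show X ^ (i + j).val = X ^ i.val * X ^ j.val
    rw [← pow_add]
    apply pow_eq_pow_iff_modEq.mpr
    rw [hXord, ZMod.val_add]
    exact Nat.mod_modEq _ _
  have pw_neg : ∀ i, pw (-i) = (pw i)⁻¹ := by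
    intro i
    apply eq_inv_of_mul_eq_one_left
    rw [← pw_add, neg_add_cancel]
    show X ^ (0 : ZMod (2 ^ b)).val = 1
    rw [ZMod.val_zero, pow_zero]
  have pwY : ∀ i, pw i * Y = Y * (pw i)⁻¹ := fun i => hXnY i.val
  set f : DihedralGroup (2 ^ b) → ↥P2 := fun g => match g with
    | .r i => pw i
    | .sr i => Y * pw i
    with hf
  have hmul : ∀ g₁ g₂, f (g₁ * g₂) = f g₁ * f g₂ := by
    rintro (i | i) (j | j)
    · show pw (i + j) = pw i * pw j
      exact pw_add i j
    · show Y * pw (j - i) = pw i * (Y * pw j)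
      rw [← mul_assoc, pwY i, mul_assoc, ← pw_neg, ← pw_add, sub_eq_neg_add]
    · show Y * pw (i + j) = (Y * pw i) * pw j
      rw [mul_assoc, pw_add]
    · show pw (j - i) = (Y * pw i) * (Y * pw j)
      rw [mul_assoc, ← mul_assoc (pw i), pwY i, ← mul_assoc, ← mul_assoc, hY2, one_mul,
        ← pw_neg, ← pw_add, sub_eq_neg_add]
  set F : DihedralGroup (2 ^ b) →* ↥P2 := MonoidHom.mk' f hmul with hF
  have hinj : Function.Injective F := by
    rw [injective_iff_map_eq_one]
    rintro (i | i) h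
    · have h1 : X ^ i.val = 1 := h
      have h2 : orderOf X ∣ i.val := orderOf_dvd_of_pow_eq_one h1
      rw [hXord] at h2
      have h3 : i.val = 0 := Nat.eq_zero_of_dvd_of_lt h2 (ZMod.val_lt i)
      have h4 : i = 0 := (ZMod.val_eq_zero i).mp h3
      rw [h4]
      rfl
    · exfalso
      have h1 : Y * pw i = 1 := h
      have hcoe : φ * (mulPerm (ζ ^ 2) hζ20) ^ i.val = 1 := Subtype.ext_iff.mp h1
      rw [aux_mulPerm_pow] at hcoe
      have happ := fun t => Equiv.ext_iff.mp hcoe t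
      simp only [Equiv.Perm.mul_apply, aux_mulPerm_apply, hφ, Equiv.Perm.one_apply] at happ
      have e1 := happ 1
      rw [mul_one] at e1
      have e2 := happ ζ
      rw [mul_pow, e1, one_mul] at e2
      exact aux_nofix hb hr1 hζ e2
  have hsurj : Function.Surjective F := by
    rintro ⟨g, hg⟩
    obtain ⟨k, hk, ε, hε, rfl⟩ := aux_P2_elts hpow hφ hζ hg
    interval_cases ε
    · refine ⟨DihedralGroup.r (k : ZMod (2 ^ b)), ?_⟩
      show pw (k : ZMod (2 ^ b)) = _
      apply Subtype.ext
      show (mulPerm (ζ ^ 2) hζ20) ^ ((k : ZMod (2 ^ b)).val)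
          = mulPerm ((ζ ^ 2) ^ k) (pow_ne_zero k (pow_ne_zero 2 hζ0)) * φ ^ 0
      rw [aux_mulPerm_pow, pow_zero, mul_one]
      apply Equiv.ext
      intro t
      simp only [aux_mulPerm_apply]
      rw [ZMod.val_cast_of_lt hk]
    · refine ⟨DihedralGroup.sr (-(k : ZMod (2 ^ b))), ?_⟩
      show Y * pw (-(k : ZMod (2 ^ b))) = _
      apply Subtype.ext
      show φ * (mulPerm (ζ ^ 2) hζ20) ^ ((-(k : ZMod (2 ^ b))).val)
          = mulPerm ((ζ ^ 2) ^ k) (pow_ne_zero k (pow_ne_zero 2 hζ0)) * φ ^ 1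
      rw [aux_mulPerm_pow, pow_one]
      set m : ℕ := (-(k : ZMod (2 ^ b))).val with hm
      apply Equiv.ext
      intro t
      simp only [Equiv.Perm.mul_apply, aux_mulPerm_apply, hφ]
      rw [mul_pow, ← pow_mul, ← pow_mul, ← pow_mul]
      congr 1
      apply aux_zeta_pow_eq hζ
      have hmr : m * r ≡ k [MOD 2 ^ b] := by
        apply (ZMod.natCast_eq_natCast_iff _ _ _).mp
        push_cast
        have hr' : (r : ZMod (2 ^ b)) = -1 := by
          have : ((r + 1 : ℕ) : ZMod (2 ^ b)) = 0 := by rw [hr1]; exact ZMod.natCast_self _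
          push_cast at this
          linear_combination this
        have hmz : ((m : ℕ) : ZMod (2 ^ b)) = -(k : ZMod (2 ^ b)) := by
          rw [hm, ZMod.natCast_val, ZMod.cast_id]
        rw [hmz, hr']
        ring
      have := Nat.ModEq.mul_left' (c := 2) hmr
      rw [show 2 * 2 ^ b = 2 ^ (b + 1) by rw [pow_succ]; ring] at this
      exact this
  exact ⟨(MulEquiv.ofBijective F ⟨hinj, hsurj⟩).symm⟩

end AuxPart7

section AuxPart8
variable {K : Type*} [Field K] [Fintype K] {b r : ℕ} {φ : Equiv.Perm K} {ζ : K}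

lemma aux_stab (hpow : ∀ x : K, x ^ (r * r) = x) (hφ : ∀ x, φ x = x ^ r)
    {f : Equiv.Perm K} (hf : f ∈ O2Singer K b ⊔ Subgroup.closure {φ})
    {v : K} (hv : v ≠ 0) (hfix : f v = v) :
    f = 1 ∨ f = mulPerm (v * (v ^ r)⁻¹)
      (mul_ne_zero hv (inv_ne_zero (pow_ne_zero r hv))) * φ := by
  obtain ⟨a, h1, h2 | h2⟩ := (aux_mem_P1 hpow hφ).mp hf
  · left
    have ha1 : a = 1 := by
      have := h2 v
      rw [hfix] at this
      have := mul_left_eq_self₀.mp this.symm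
      tauto
    apply Equiv.ext
    intro x
    rw [h2 x, ha1, one_mul, Equiv.Perm.one_apply]
  · right
    have hvr : v ^ r ≠ 0 := pow_ne_zero r hv
    have ha : a = v * (v ^ r)⁻¹ := by
      apply (eq_mul_inv_iff_mul_eq₀ hvr).mpr
      rw [← h2 v, hfix]
    apply Equiv.ext
    intro x
    rw [h2 x, ha, Equiv.Perm.mul_apply, aux_mulPerm_apply, hφ]

lemma aux_gv (hb : 2 ≤ b) (hr1 : r + 1 = 2 ^ b) (hpow : ∀ x : K, x ^ (r * r) = x)
    (hφ : ∀ x, φ x = x ^ r) (hζ : orderOf ζ = 2 ^ (b + 1)) {v : K} (hv : v ≠ 0) :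
    ∃ g : Equiv.Perm K, g ∈ O2SingerSq K b ⊔ Subgroup.closure {φ} ∧
      g = mulPerm (v * (v ^ r)⁻¹) (mul_ne_zero hv (inv_ne_zero (pow_ne_zero r hv))) * φ ∧
      g v = v ∧ g ≠ 1 ∧ g (ζ * v) ≠ ζ * v := by
  have hζ0 := aux_zeta_ne_zero hζ
  have hvr : v ^ r ≠ 0 := pow_ne_zero r hv
  set av : K := v * (v ^ r)⁻¹ with hav
  have hav0 : av ≠ 0 := mul_ne_zero hv (inv_ne_zero hvr)
  set g : Equiv.Perm K := mulPerm av hav0 * φ with hg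
  have hgapp : ∀ x : K, g x = av * x ^ r := by
    intro x
    rw [hg, Equiv.Perm.mul_apply, aux_mulPerm_apply, hφ]
  have hvrr : (v ^ r) ^ (r + 1) = v ^ (r + 1) := by
    rw [← pow_mul, show r * (r + 1) = r * r + r by ring, pow_add, hpow v, ← pow_succ']
  have h1 : av ^ (r + 1) = 1 := by
    rw [hav, mul_pow, inv_pow, hvrr, mul_inv_cancel₀ (pow_ne_zero _ hv)]
  have h2b : av ^ 2 ^ b = 1 := by rwa [hr1] at h1
  obtain ⟨k, hk, hak⟩ := aux_roots_eq_pow (Nat.two_pow_pos b) (aux_orderOf_zetasq hζ) h2b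
  have hmem : g ∈ O2SingerSq K b ⊔ Subgroup.closure {φ} := by
    refine mul_mem (Subgroup.mem_sup_left ?_) aux_phi_mem_P2
    exact ⟨ζ ^ k, aux_pow_pow (hζ ▸ pow_orderOf_eq_one ζ) k,
      fun x => by rw [aux_mulPerm_apply, hak, pow_right_comm]⟩
  have hfix : g v = v := by
    rw [hgapp, hav, mul_assoc, inv_mul_cancel₀ hvr, mul_one]
  refine ⟨g, hmem, hg, hfix, ?_, ?_⟩
  · intro hone
    have e1 : av = 1 := by
      have := hgapp 1
      rw [hone, Equiv.Perm.one_apply, one_pow, mul_one] at this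
      exact this.symm
    have e2 := hgapp ζ
    rw [hone, Equiv.Perm.one_apply, e1, one_mul] at e2
    exact aux_nofix hb hr1 hζ e2.symm
  · intro hfixz
    rw [hgapp, mul_pow, show av * (ζ ^ r * v ^ r) = ζ ^ r * (av * v ^ r) by ring,
      ← hgapp, hfix] at hfixz
    exact aux_nofix hb hr1 hζ (mul_right_cancel₀ hv hfixz)

end AuxPart8


/-- Proposition 1.6: for a Mersenne prime `r = 2^b - 1`, `P₁ = O₂(N)⟨φ⟩ ≤ Γ(r²)` is
semidihedral of order `2^(b+2)`, `P₂ = (O₂(N))²⟨φ⟩` is dihedral of order `2^(b+1)`, and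
any `G = PC` with `P ∈ {P₁, P₂}` and `C ≤ O₂(N)` is an irreducible nilpotent subgroup
of `GL(2, r)` which is IBIS on `GF(r²) \ {0}` with `b(G) = 2`. -/
theorem mersenne_nilpotent_isIBIS
    {F K : Type*} [Field F] [Field K] [Algebra F K] [Fintype F] [Fintype K]
    (b r : ℕ) (hr : r.Prime) (hrb : r = 2 ^ b - 1)
    (hF : Fintype.card F = r) (hK : Fintype.card K = r ^ 2)
    (φ : Equiv.Perm K) (hφ : ∀ x : K, φ x = x ^ r) :
    IsSemidihedralOfOrder ↥(O2Singer K b ⊔ Subgroup.closure {φ}) (b + 2) ∧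
    Nonempty (↥(O2SingerSq K b ⊔ Subgroup.closure {φ}) ≃* DihedralGroup (2 ^ b)) ∧
    ∀ G P C : Subgroup (Equiv.Perm K),
      (P = O2Singer K b ⊔ Subgroup.closure {φ} ∨
        P = O2SingerSq K b ⊔ Subgroup.closure {φ}) →
      C ≤ O2Singer K b →
      (G : Set (Equiv.Perm K)) = (P : Set (Equiv.Perm K)) * (C : Set (Equiv.Perm K)) →
      ((∀ W : Submodule F K, (∀ g ∈ G, ∀ w ∈ W, g • w ∈ W) → W = ⊥ ∨ W = ⊤) ∧
        Group.IsNilpotent ↥G ∧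
        IsIBISOn G {v : K | v ≠ 0} ∧
        baseSizeOn G {v : K | v ≠ 0} = 2) := by
  have hb : 2 ≤ b := aux_mersenne_two_le hr hrb
  have hr1 : r + 1 = 2 ^ b := aux_mersenne_succ hrb
  have hpow : ∀ x : K, x ^ (r * r) = x := by
    intro x
    have := FiniteField.pow_card x
    rwa [hK, pow_two] at this
  have hdvd : 2 ^ (b + 1) ∣ Fintype.card K - 1 := by
    rw [hK, pow_two, aux_card_dvd hr hrb]
    exact Dvd.intro _ rfl
  obtain ⟨ζ, hζ⟩ := aux_exists_zeta b hdvd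
  have hζ0 := aux_zeta_ne_zero hζ
  have hζ20 : (ζ ^ 2 : K) ≠ 0 := pow_ne_zero 2 hζ0
  have h4b : (4 : ℕ) ≤ 2 ^ b := by
    calc (4 : ℕ) = 2 ^ 2 := rfl
    _ ≤ 2 ^ b := Nat.pow_le_pow_right (by norm_num) hb
  refine ⟨aux_semidihedral hb hr1 hpow hφ hζ, aux_dihedral hb hr1 hpow hφ hζ, ?_⟩
  intro G P C hP hC hG
  set P1 := O2Singer K b ⊔ Subgroup.closure {φ} with hP1d
  set P2 := O2SingerSq K b ⊔ Subgroup.closure {φ} with hP2d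
  have hsqle : O2SingerSq K b ≤ O2Singer K b := by
    rintro f ⟨a, h1, h2⟩
    exact ⟨a ^ 2, aux_pow_pow h1 2, h2⟩
  have hP21 : P2 ≤ P1 := sup_le_sup_right hsqle _
  have hPle1 : P ≤ P1 := by rcases hP with rfl | rfl; exacts [le_rfl, hP21]
  have hP2leP : P2 ≤ P := by rcases hP with rfl | rfl; exacts [hP21, le_rfl]
  have hPG : P ≤ G := by
    intro p hp
    have : p ∈ (G : Set (Equiv.Perm K)) := by
      rw [hG]
      simpa using Set.mul_mem_mul hp (C.one_mem)
    exact this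
  have hGle1 : G ≤ P1 := by
    intro g hg
    have : g ∈ (G : Set (Equiv.Perm K)) := hg
    rw [hG] at this
    obtain ⟨p, hp, c, hc, rfl⟩ := Set.mem_mul.mp this
    exact mul_mem (hPle1 hp) (Subgroup.mem_sup_left (hC hc))
  have hP2G : P2 ≤ G := le_trans hP2leP hPG
  have hφG : φ ∈ G := hP2G aux_phi_mem_P2
  have hφ1 : φ ≠ 1 := aux_phi_ne_one hb hr1 hζ hφ
  have hζ2G : mulPerm (ζ ^ 2) hζ20 ∈ G :=
    hP2G (Subgroup.mem_sup_left (by simpa using aux_mem_O2Sq (b := b) hζ 1))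
  -- stabilizer facts
  have KEY : ∀ g ∈ G, ∀ (v : K) (hv : v ≠ 0), g v = v →
      g = 1 ∨ g = mulPerm (v * (v ^ r)⁻¹)
        (mul_ne_zero hv (inv_ne_zero (pow_ne_zero r hv))) * φ := by
    intro g hg v hv hfix
    exact aux_stab hpow hφ (hGle1 hg) hv hfix
  refine ⟨?_, ?_, ?_, ?_⟩
  · -- irreducibility
    intro W hW
    by_cases hbot : W = ⊥
    · exact Or.inl hbot
    right
    haveI : FiniteDimensional F K := Module.Finite.of_finite
    have hfr : Module.finrank F K = 2 := by
      have h := Module.card_eq_pow_finrank (K := F) (V := K)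
      rw [hF, hK] at h
      exact (Nat.pow_right_injective hr.two_le h.symm)
    obtain ⟨w, hwW, hw0⟩ := Submodule.exists_mem_ne_zero_of_ne_bot hbot
    have hζ2w : ζ ^ 2 * w ∈ W := by
      have := hW (mulPerm (ζ ^ 2) hζ20) hζ2G w hwW
      rwa [Equiv.Perm.smul_def, aux_mulPerm_apply] at this
    have hli : LinearIndependent F ![w, ζ ^ 2 * w] := by
      refine (LinearIndependent.pair_iff' hw0).mpr ?_
      intro c hc
      rw [Algebra.smul_def] at hc
      have hcz : algebraMap F K c = ζ ^ 2 := mul_right_cancel₀ hw0 hc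
      have hc0 : c ≠ 0 := by
        rintro rfl
        rw [map_zero] at hcz
        exact hζ20 hcz.symm
      have hone : (ζ ^ 2) ^ (r - 1) = 1 := by
        rw [← hcz, ← map_pow, ← hF, FiniteField.pow_card_sub_one_eq_one c hc0, map_one]
      have hdvd2 : 2 ^ b ∣ r - 1 :=
        aux_orderOf_zetasq hζ ▸ orderOf_dvd_of_pow_eq_one hone
      have := Nat.le_of_dvd (by omega) hdvd2
      omega
    have hsp : Submodule.span F (Set.range ![w, ζ ^ 2 * w]) ≤ W := by
      rw [Submodule.span_le]
      rintro x ⟨i, rfl⟩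
      fin_cases i <;> simpa
    have h2 : Module.finrank F ↥(Submodule.span F (Set.range ![w, ζ ^ 2 * w])) = 2 := by
      rw [finrank_span_eq_card hli]
      simp
    have hWfr : Module.finrank F ↥W = 2 :=
      le_antisymm (hfr ▸ Submodule.finrank_le W) (h2 ▸ Submodule.finrank_mono hsp)
    exact Submodule.eq_top_of_finrank_eq (by rw [hWfr, hfr])
  · -- nilpotency
    haveI : Fact (Nat.Prime 2) := ⟨Nat.prime_two⟩
    have hp1 : IsPGroup 2 ↥P1 := IsPGroup.of_card (aux_card_P1 hb hr1 hpow hφ hζ)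
    exact (IsPGroup.to_le hp1 hGle1).isNilpotent
  · -- IBIS
    have hlen : ∀ l : List K, IsIrredundantBaseOn G {v : K | v ≠ 0} l → l.length = 2 := by
      intro l hl
      obtain ⟨⟨hmem, hirr⟩, hbase⟩ := hl
      rcases l with _ | ⟨v, l'⟩
      · exact absurd (hbase φ hφG (by intro x hx; simp at hx)) hφ1
      rcases l' with _ | ⟨w, rest⟩
      · exfalso
        have hv0 : v ≠ 0 := hmem v (by simp)
        obtain ⟨g, hgP2, hgdef, hgfix, hgne, hgmov⟩ := aux_gv hb hr1 hpow hφ hζ hv0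
        refine hgne (hbase g (hP2G hgP2) ?_)
        intro x hx
        simp only [List.mem_singleton] at hx
        subst hx
        rw [Equiv.Perm.smul_def, hgfix]
      have hv0 : v ≠ 0 := hmem v (by simp)
      obtain ⟨g1, hg1G, hg1fix, hg1mov⟩ := hirr 1 (by simp only [List.length_cons]; omega)
      have hg1v : g1 v = v := by
        have := hg1fix v (by simp)
        rwa [Equiv.Perm.smul_def] at this
      have hg1w : g1 w ≠ w := by
        simpa [Equiv.Perm.smul_def] using hg1mov
      rcases KEY g1 hg1G v hv0 hg1v with rfl | hg1eq
      · simp at hg1w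
      rcases rest with _ | ⟨u, t⟩
      · rfl
      exfalso
      obtain ⟨g2, hg2G, hg2fix, hg2mov⟩ := hirr 2 (by simp only [List.length_cons]; omega)
      have hg2v : g2 v = v := by
        have := hg2fix v (by simp)
        rwa [Equiv.Perm.smul_def] at this
      have hg2w : g2 w = w := by
        have := hg2fix w (by simp)
        rwa [Equiv.Perm.smul_def] at this
      have hg2u : g2 u ≠ u := by
        simpa [Equiv.Perm.smul_def] using hg2mov
      rcases KEY g2 hg2G v hv0 hg2v with rfl | hg2eq
      · simp at hg2u
      rw [hg2eq] at hg2w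
      rw [hg1eq] at hg1w
      exact hg1w hg2w
    intro l1 l2 h1 h2
    rw [hlen l1 h1, hlen l2 h2]
  · -- base size
    have hmem2 : 2 ∈ {k | ∃ l : List K, l.length = k ∧ (∀ x ∈ l, x ∈ {v : K | v ≠ 0}) ∧
        ∀ g ∈ G, (∀ x ∈ l, g • x = x) → g = 1} := by
      refine ⟨[1, ζ], rfl, ?_, ?_⟩
      · intro x hx
        simp only [List.mem_cons, List.mem_singleton, List.not_mem_nil, or_false] at hx
        rcases hx with rfl | rfl
        · exact one_ne_zero
        · exact hζ0
      · intro g hg hfixall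
        have hfix1 : g (1 : K) = 1 := by
          have := hfixall 1 (by simp)
          rwa [Equiv.Perm.smul_def] at this
        have hfixζ : g ζ = ζ := by
          have := hfixall ζ (by simp)
          rwa [Equiv.Perm.smul_def] at this
        rcases KEY g hg 1 one_ne_zero hfix1 with rfl | hgeq
        · rfl
        exfalso
        rw [hgeq] at hfixζ
        rw [Equiv.Perm.mul_apply, aux_mulPerm_apply, hφ, one_pow, inv_one, mul_one,
          one_mul] at hfixζ
        exact aux_nofix hb hr1 hζ hfixζ
    have hlow : ∀ k ∈ {k | ∃ l : List K, l.length = k ∧ (∀ x ∈ l, x ∈ {v : K | v ≠ 0}) ∧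
        ∀ g ∈ G, (∀ x ∈ l, g • x = x) → g = 1}, 2 ≤ k := by
      rintro k ⟨l, hlk, hS, hstab⟩
      rcases l with _ | ⟨v, l'⟩
      · exact absurd (hstab φ hφG (by intro x hx; simp at hx)) hφ1
      rcases l' with _ | ⟨w, rest⟩
      · exfalso
        have hv0 : v ≠ 0 := hS v (by simp)
        obtain ⟨g, hgP2, hgdef, hgfix, hgne, hgmov⟩ := aux_gv hb hr1 hpow hφ hζ hv0
        refine hgne (hstab g (hP2G hgP2) ?_)
        intro x hx
        simp only [List.mem_singleton] at hx
        subst hx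
        rw [Equiv.Perm.smul_def, hgfix]
      · simp only [List.length_cons] at hlk
        omega
    exact le_antisymm (Nat.sInf_le hmem2) (le_csInf ⟨2, hmem2⟩ hlow)
end

section
/- Let W be the additive group of a finite field F and let H = F^* act on W by scalar multiplication. Let X = H ≀ S_2 act on V = W² in the natural imprimitive action (pairs (h₁,h₂) ∈ H² act coordinatewise and S_2 permutes the two coordinates). Suppose G ≤ X satisfies: (1) G contains the coordinate swap (1,2) and all elements (h, h^{−1}) for h ∈ H; and (2) (k, 1) ∈ G for some k ∈ H with k ≠ 1. Then G is an irreducible subgroup of GL(V) that is IBIS on V \ {0} with b(G) = 2. In particular, if H is a 2-group then G is a nilpotent irreducible IBIS linear group. -/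
/-- The permutation `(x, y) ↦ (h₁x, h₂y)` of `F × F`, i.e. the element `(h₁, h₂)` of the
base group of the wreath product `F* ≀ S₂`. -/
def diagPerm {F : Type*} [Field F] (h₁ h₂ : F) (H₁ : h₁ ≠ 0) (H₂ : h₂ ≠ 0) :
    Equiv.Perm (F × F) :=
  (Equiv.mulLeft₀ h₁ H₁).prodCongr (Equiv.mulLeft₀ h₂ H₂)

section AuxWreath
variable {F : Type*} [Field F]

lemma diagPerm_apply' (h₁ h₂ : F) (H₁ : h₁ ≠ 0) (H₂ : h₂ ≠ 0) (p : F × F) :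
    diagPerm h₁ h₂ H₁ H₂ p = (h₁ * p.1, h₂ * p.2) := rfl

lemma pow_diag' (g : Equiv.Perm (F × F)) (h₁ h₂ : F)
    (hg : ∀ p : F × F, g p = (h₁ * p.1, h₂ * p.2)) :
    ∀ (m : ℕ) (p : F × F), (g ^ m) p = (h₁ ^ m * p.1, h₂ ^ m * p.2) := by
  intro m
  induction m with
  | zero => intro p; simp
  | succ n ih =>
    intro p
    have h1 : g ^ (n + 1) = g * g ^ n := by rw [pow_succ']
    have h2 : (g * g ^ n) p = g ((g ^ n) p) := rfl
    rw [h1, h2, ih, hg]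
    refine Prod.ext ?_ ?_ <;> · simp only []; ring

end AuxWreath

/-- Proposition 1.7: a subgroup `G` of the wreath product `H ≀ S₂` (`H = F*` acting on the
additive group `W` of the finite field `F` by scalars) acting imprimitively on `V = W²`,
containing the swap `(1,2)`, all elements `(h, h⁻¹)`, and some `(k, 1)` with `k ≠ 1`,
is an irreducible subgroup of `GL(V)` which is IBIS on `V \ {0}` with `b(G) = 2`;
if `H` is a `2`-group then moreover `G` is nilpotent. -/
theorem wreath_isIBIS
    {F : Type*} [Field F] [Fintype F]
    (G : Subgroup (Equiv.Perm (F × F)))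
    (hGwr : ∀ g ∈ G, ∃ h₁ h₂ : F, h₁ ≠ 0 ∧ h₂ ≠ 0 ∧
      ((∀ p : F × F, g p = (h₁ * p.1, h₂ * p.2)) ∨
        (∀ p : F × F, g p = (h₁ * p.2, h₂ * p.1))))
    (hswap : (Equiv.prodComm F F : Equiv.Perm (F × F)) ∈ G)
    (hdiag : ∀ (h : F) (hh : h ≠ 0), diagPerm h h⁻¹ hh (inv_ne_zero hh) ∈ G)
    (hk : ∃ (k : F) (hk0 : k ≠ 0), k ≠ 1 ∧ diagPerm k 1 hk0 one_ne_zero ∈ G) :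
    (∀ W : Submodule F (F × F), (∀ g ∈ G, ∀ w ∈ W, g • w ∈ W) → W = ⊥ ∨ W = ⊤) ∧
    IsIBISOn G {v : F × F | v ≠ 0} ∧
    baseSizeOn G {v : F × F | v ≠ 0} = 2 ∧
    (IsPGroup 2 Fˣ → Group.IsNilpotent ↥G) := by
  obtain ⟨k, hk0, hk1, hkG⟩ := hk
  -- basic named elements
  set s : Equiv.Perm (F × F) := (Equiv.prodComm F F : Equiv.Perm (F × F)) with hs_def
  have hs_app : ∀ p : F × F, s p = (p.2, p.1) := fun p => rfl
  set t : Equiv.Perm (F × F) := diagPerm k 1 hk0 one_ne_zero with ht_def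
  have ht_app : ∀ p : F × F, t p = (k * p.1, p.2) := by
    intro p; rw [ht_def, diagPerm_apply', one_mul]
  -- e acts as (p.1, k * p.2)
  set e : Equiv.Perm (F × F) := diagPerm k⁻¹ (k⁻¹)⁻¹ (inv_ne_zero hk0) (inv_ne_zero (inv_ne_zero hk0)) * t with he_def
  have heG : e ∈ G := mul_mem (hdiag k⁻¹ (inv_ne_zero hk0)) hkG
  have he_app : ∀ p : F × F, e p = (p.1, k * p.2) := by
    intro p
    show diagPerm k⁻¹ (k⁻¹)⁻¹ _ _ (t p) = _
    rw [ht_app, diagPerm_apply']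
    simp [inv_mul_cancel_left₀ hk0, inv_inv]
  -- the swap-type stabilizer element for (a,b) with a,b ≠ 0
  have hw : ∀ a b : F, a ≠ 0 → b ≠ 0 → ∃ g ∈ G,
      (∀ p : F × F, g p = (a * b⁻¹ * p.2, (a * b⁻¹)⁻¹ * p.1)) := by
    intro a b ha hb
    have hab : a * b⁻¹ ≠ 0 := mul_ne_zero ha (inv_ne_zero hb)
    refine ⟨diagPerm (a * b⁻¹) (a * b⁻¹)⁻¹ hab (inv_ne_zero hab) * s,
      mul_mem (hdiag _ hab) hswap, ?_⟩
    intro p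
    show diagPerm (a * b⁻¹) (a * b⁻¹)⁻¹ _ _ (s p) = _
    rw [hs_app, diagPerm_apply']
  have htne : t ≠ 1 := by
    intro h
    have : t (1, 0) = (1, 0) := by rw [h]; rfl
    rw [ht_app] at this
    exact hk1 (by simpa using congrArg Prod.fst this)
  -- stab1 : every nonzero vector has a nontrivial stabilizer element
  have stab1 : ∀ v : F × F, v ≠ 0 → ∃ g ∈ G, g ≠ 1 ∧ g v = v := by
    intro v hv
    by_cases h1 : v.1 = 0
    · have h2 : v.2 ≠ 0 := by
        intro h2; exact hv (Prod.ext h1 h2)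
      refine ⟨t, hkG, htne, ?_⟩
      rw [ht_app, h1, mul_zero]
      exact Prod.ext h1.symm rfl
    · by_cases h2 : v.2 = 0
      · refine ⟨e, heG, ?_, ?_⟩
        · intro h
          have hfix : e (0, 1) = (0, 1) := by rw [h]; rfl
          rw [he_app] at hfix
          have := congrArg Prod.snd hfix
          simp at this
          exact hk1 this
        · rw [he_app, h2, mul_zero]
          exact Prod.ext rfl h2.symm
      · obtain ⟨g, hgG, hg⟩ := hw v.1 v.2 h1 h2
        refine ⟨g, hgG, ?_, ?_⟩
        · intro h
          have hfix : g (1, 0) = (1, 0) := by rw [h]; rfl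
          rw [hg] at hfix
          have := congrArg Prod.fst hfix
          simp at this
        · rw [hg]
          refine Prod.ext ?_ ?_ <;> · simp only []; field_simp <;> ring
  -- stab2 : two irredundant points pin everything down
  have stab2 : ∀ v w : F × F, v ≠ 0 → (∃ g₀ ∈ G, g₀ v = v ∧ g₀ w ≠ w) →
      ∀ g ∈ G, g v = v → g w = w → g = 1 := by
    intro v w hv ⟨g₀, hg₀G, hg₀v, hg₀w⟩ g hgG hgv hgw
    obtain ⟨h₁, h₂, hh₁, hh₂, hcase⟩ := hGwr g hgG
    by_cases hv1 : v.1 = 0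
    · -- v = (0, b), b ≠ 0
      have hv2 : v.2 ≠ 0 := fun h2 => hv (Prod.ext hv1 h2)
      rcases hcase with hd | hsw
      · -- g diag : h₂ = 1
        have h₂1 : h₂ = 1 := by
          have := congrArg Prod.snd ((hd v).symm.trans hgv)
          simp only [] at this
          exact mul_right_cancel₀ hv2 (by rw [this, one_mul])
        -- g₀ analysis: g₀ is diag with second coord 1, moves w ⟹ w.1 ≠ 0
        obtain ⟨h₁', h₂', hh₁', hh₂', hcase'⟩ := hGwr g₀ hg₀G
        rcases hcase' with hd' | hsw'
        · have h₂1' : h₂' = 1 := by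
            have := congrArg Prod.snd ((hd' v).symm.trans hg₀v)
            simp only [] at this
            exact mul_right_cancel₀ hv2 (by rw [this, one_mul])
          -- g₀ moves w: so h₁' * w.1 ≠ w.1, hence w.1 ≠ 0
          have hw1 : w.1 ≠ 0 := by
            intro hw1
            apply hg₀w
            rw [hd' w, hw1, mul_zero, h₂1', one_mul]
            exact Prod.ext hw1.symm rfl
          -- g fixes w: h₁ * w.1 = w.1 ⟹ h₁ = 1
          have h₁1 : h₁ = 1 := by
            have := congrArg Prod.fst ((hd w).symm.trans hgw)
            simp only [] at this
            exact mul_right_cancel₀ hw1 (by rw [this, one_mul])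
          apply Equiv.ext
          intro p
          rw [hd p, h₁1, h₂1, one_mul, one_mul]
          rfl
        · -- XX g₀ swap type fixing (0, b): h₂' * 0 = b, contradiction
          exfalso
          have := congrArg Prod.snd ((hsw' v).symm.trans hg₀v)
          simp only [hv1, mul_zero] at this
          exact hv2 this.symm
      · -- g swap type fixing (0, b): h₂ * 0 = b contradiction
        exfalso
        have := congrArg Prod.snd ((hsw v).symm.trans hgv)
        simp only [hv1, mul_zero] at this
        exact hv2 this.symm
    · by_cases hv2 : v.2 = 0
      · -- v = (a, 0), a ≠ 0 : symmetric
        rcases hcase with hd | hsw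
        · have h₁1 : h₁ = 1 := by
            have := congrArg Prod.fst ((hd v).symm.trans hgv)
            simp only [] at this
            exact mul_right_cancel₀ hv1 (by rw [this, one_mul])
          obtain ⟨h₁', h₂', hh₁', hh₂', hcase'⟩ := hGwr g₀ hg₀G
          rcases hcase' with hd' | hsw'
          · have h₁1' : h₁' = 1 := by
              have := congrArg Prod.fst ((hd' v).symm.trans hg₀v)
              simp only [] at this
              exact mul_right_cancel₀ hv1 (by rw [this, one_mul])
            have hw2 : w.2 ≠ 0 := by
              intro hw2
              apply hg₀w
              rw [hd' w, hw2, mul_zero, h₁1', one_mul]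
              exact Prod.ext rfl hw2.symm
            have h₂1 : h₂ = 1 := by
              have := congrArg Prod.snd ((hd w).symm.trans hgw)
              simp only [] at this
              exact mul_right_cancel₀ hw2 (by rw [this, one_mul])
            apply Equiv.ext
            intro p
            rw [hd p, h₁1, h₂1, one_mul, one_mul]
            rfl
          · exfalso
            have := congrArg Prod.fst ((hsw' v).symm.trans hg₀v)
            simp only [hv2, mul_zero] at this
            exact hv1 this.symm
        · exfalso
          have := congrArg Prod.fst ((hsw v).symm.trans hgv)
          simp only [hv2, mul_zero] at this
          exact hv1 this.symm
      · -- v = (a,b), a,b ≠ 0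
        rcases hcase with hd | hsw
        · have h₁1 : h₁ = 1 := by
            have := congrArg Prod.fst ((hd v).symm.trans hgv)
            simp only [] at this
            exact mul_right_cancel₀ hv1 (by rw [this, one_mul])
          have h₂1 : h₂ = 1 := by
            have := congrArg Prod.snd ((hd v).symm.trans hgv)
            simp only [] at this
            exact mul_right_cancel₀ hv2 (by rw [this, one_mul])
          apply Equiv.ext
          intro p
          rw [hd p, h₁1, h₂1, one_mul, one_mul]
          rfl
        · -- g swap: h₁, h₂ determined; g₀ must be the same swap
          exfalso
          have e1 : h₁ * v.2 = v.1 := congrArg Prod.fst ((hsw v).symm.trans hgv)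
          have e2 : h₂ * v.1 = v.2 := congrArg Prod.snd ((hsw v).symm.trans hgv)
          obtain ⟨h₁', h₂', hh₁', hh₂', hcase'⟩ := hGwr g₀ hg₀G
          rcases hcase' with hd' | hsw'
          · -- g₀ diag fixing v: g₀ = 1, contradicts moving w
            have h₁1' : h₁' = 1 := by
              have := congrArg Prod.fst ((hd' v).symm.trans hg₀v)
              simp only [] at this
              exact mul_right_cancel₀ hv1 (by rw [this, one_mul])
            have h₂1' : h₂' = 1 := by
              have := congrArg Prod.snd ((hd' v).symm.trans hg₀v)
              simp only [] at this
              exact mul_right_cancel₀ hv2 (by rw [this, one_mul])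
            exact hg₀w (by rw [hd' w, h₁1', h₂1', one_mul, one_mul])
          · have e1' : h₁' * v.2 = v.1 := congrArg Prod.fst ((hsw' v).symm.trans hg₀v)
            have e2' : h₂' * v.1 = v.2 := congrArg Prod.snd ((hsw' v).symm.trans hg₀v)
            have h1eq : h₁' = h₁ := mul_right_cancel₀ hv2 (e1'.trans e1.symm)
            have h2eq : h₂' = h₂ := mul_right_cancel₀ hv1 (e2'.trans e2.symm)
            apply hg₀w
            rw [hsw' w, h1eq, h2eq, ← hsw w, hgw]
  -- pointwise stabilizer of (1,0),(0,1) trivial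
  have fix2 : ∀ g ∈ G, g ((1 : F), (0 : F)) = (1, 0) → g ((0 : F), (1 : F)) = (0, 1) → g = 1 := by
    intro g hgG hg1 hg2
    obtain ⟨h₁, h₂, hh₁, hh₂, hcase⟩ := hGwr g hgG
    rcases hcase with hd | hsw
    · have e1 : h₁ = 1 := by
        have := congrArg Prod.fst ((hd (1, 0)).symm.trans hg1)
        simpa using this
      have e2 : h₂ = 1 := by
        have := congrArg Prod.snd ((hd (0, 1)).symm.trans hg2)
        simpa using this
      apply Equiv.ext; intro p; rw [hd p, e1, e2, one_mul, one_mul]; rfl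
    · exfalso
      have := congrArg Prod.fst ((hsw (1, 0)).symm.trans hg1)
      simpa using this
  refine ⟨?_, ?_, ?_, ?_⟩
  · -- irreducibility
    intro W hW
    by_cases hbot : W = ⊥
    · exact Or.inl hbot
    right
    obtain ⟨v, hvW, hv0⟩ := Submodule.exists_mem_ne_zero_of_ne_bot hbot
    -- first get (c, 0) ∈ W with c ≠ 0
    have step : ∃ c : F, c ≠ 0 ∧ ((c, 0) : F × F) ∈ W := by
      by_cases h2 : v.2 = 0
      · exact ⟨v.1, fun h1 => hv0 (Prod.ext h1 h2), by rwa [← Prod.mk.eta (p := v), h2] at hvW⟩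
      · by_cases h1 : v.1 = 0
        · refine ⟨v.2, h2, ?_⟩
          have := hW s hswap v hvW
          rwa [show s • v = (v.2, v.1) from rfl, h1] at this
        · have htv : ((k * v.1, v.2) : F × F) ∈ W := by
            have := hW t hkG v hvW
            rwa [show t • v = t v from rfl, ht_app, ← Prod.mk.eta (p := v)] at this
          refine ⟨(k - 1) * v.1, mul_ne_zero (sub_ne_zero.mpr hk1) h1, ?_⟩
          have hsub := W.sub_mem htv (show ((v.1, v.2) : F × F) ∈ W by rwa [← Prod.mk.eta (p := v)] at hvW)
          have heq : ((k * v.1, v.2) : F × F) - (v.1, v.2) = ((k - 1) * v.1, 0) := by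
            rw [Prod.mk_sub_mk]
            exact Prod.ext (by ring) (by ring)
          rwa [heq] at hsub
    obtain ⟨c, hc0, hcW⟩ := step
    have h10 : ((1 : F), (0 : F)) ∈ W := by
      have := W.smul_mem c⁻¹ hcW
      rwa [Prod.smul_mk, smul_eq_mul, smul_eq_mul, inv_mul_cancel₀ hc0, mul_zero] at this
    have h01 : ((0 : F), (1 : F)) ∈ W := by
      have := hW s hswap _ h10
      rwa [show s • ((1 : F), (0 : F)) = ((0 : F), (1 : F)) from rfl] at this
    rw [Submodule.eq_top_iff']
    intro x
    have : x = x.1 • ((1 : F), (0 : F)) + x.2 • ((0 : F), (1 : F)) := by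
      refine Prod.ext ?_ ?_ <;> simp
    rw [this]
    exact W.add_mem (W.smul_mem _ h10) (W.smul_mem _ h01)
  · -- IBIS
    have hlen : ∀ l : List (F × F), IsIrredundantBaseOn G {v : F × F | v ≠ 0} l → l.length = 2 := by
      intro l ⟨⟨hmem, hirr⟩, hbase⟩
      match l with
      | [] =>
        exact absurd (hbase t hkG (by simp)) htne
      | [a] =>
        exfalso
        have ha : a ≠ 0 := hmem a (by simp)
        obtain ⟨g, hgG, hg1, hga⟩ := stab1 a ha
        exact hg1 (hbase g hgG (by simpa using hga))
      | [a, b] => rfl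
      | a :: b :: c :: rest =>
        exfalso
        have ha : a ≠ 0 := hmem a (by simp)
        obtain ⟨g₀, hg₀G, hg₀fix, hg₀mv⟩ := hirr 1 (by simp)
        obtain ⟨g, hgG, hgfix, hgmv⟩ := hirr 2 (by simp)
        have hfix0 : g₀ a = a := hg₀fix a (by simp)
        have hg1 : g = 1 := by
          refine stab2 a b ha ⟨g₀, hg₀G, hfix0, ?_⟩ g hgG ?_ ?_
          · simpa using hg₀mv
          · exact hgfix a (by simp)
          · exact hgfix b (by simp)
        apply hgmv
        rw [hg1]
        simp
    intro l₁ l₂ h₁ h₂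
    rw [hlen l₁ h₁, hlen l₂ h₂]
  · -- base size = 2
    apply le_antisymm
    · apply Nat.sInf_le
      refine ⟨[((1 : F), (0 : F)), ((0 : F), (1 : F))], rfl, ?_, ?_⟩
      · intro x hx
        simp only [List.mem_cons, List.mem_singleton, List.not_mem_nil, or_false] at hx
        rcases hx with h | h <;> · subst h; simp [Prod.ext_iff]
      · intro g hgG hfix
        exact fix2 g hgG (hfix _ (by simp)) (hfix _ (by simp))
    · apply le_csInf
      · exact ⟨2, [((1 : F), (0 : F)), ((0 : F), (1 : F))], rfl,
          by intro x hx
             simp only [List.mem_cons, List.mem_singleton, List.not_mem_nil, or_false] at hx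
             rcases hx with h | h <;> · subst h; simp [Prod.ext_iff],
          fun g hgG hfix => fix2 g hgG (hfix _ (by simp)) (hfix _ (by simp))⟩
      · rintro n ⟨l, hlen, hmem, hbase⟩
        by_contra hlt
        push_neg at hlt
        interval_cases n
        · match l, hlen with
          | [], _ => exact htne (hbase t hkG (by simp))
        · match l, hlen with
          | [a], _ =>
            have ha : a ≠ 0 := hmem a (by simp)
            obtain ⟨g, hgG, hg1, hga⟩ := stab1 a ha
            exact hg1 (hbase g hgG (by simpa using hga))
  · -- nilpotency
    intro h2
    have hpow : ∀ h : F, h ≠ 0 → ∃ n : ℕ, h ^ (2 ^ n) = 1 := by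
      intro h hh
      obtain ⟨n, hn⟩ := h2 (Units.mk0 h hh)
      exact ⟨n, by simpa [Units.ext_iff] using hn⟩
    have hpG : IsPGroup 2 ↥G := by
      intro g
      obtain ⟨h₁, h₂, hh₁, hh₂, hcase⟩ := hGwr g.1 g.2
      rcases hcase with hd | hsw
      · obtain ⟨n₁, hn₁⟩ := hpow h₁ hh₁
        obtain ⟨n₂, hn₂⟩ := hpow h₂ hh₂
        refine ⟨n₁ + n₂, ?_⟩
        apply Subtype.ext
        rw [SubmonoidClass.coe_pow]
        apply Equiv.ext
        intro p
        rw [pow_diag' g.1 h₁ h₂ hd]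
        have e1 : h₁ ^ 2 ^ (n₁ + n₂) = 1 := by
          rw [pow_add, pow_mul, hn₁, one_pow]
        have e2 : h₂ ^ 2 ^ (n₁ + n₂) = 1 := by
          rw [pow_add, mul_comm, pow_mul, hn₂, one_pow]
        rw [e1, e2, one_mul, one_mul]
        rfl
      · have hsq : ∀ p : F × F, ((g : Equiv.Perm (F × F)) ^ 2) p = (h₁ * h₂ * p.1, h₁ * h₂ * p.2) := by
          intro p
          have : ((g : Equiv.Perm (F × F)) ^ 2) p = (g : Equiv.Perm (F × F)) ((g : Equiv.Perm (F × F)) p) := by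
            rw [pow_two]; rfl
          rw [this, hsw p, hsw]
          refine Prod.ext ?_ ?_ <;> · simp only []; ring
        obtain ⟨n, hn⟩ := hpow (h₁ * h₂) (mul_ne_zero hh₁ hh₂)
        refine ⟨n + 1, ?_⟩
        apply Subtype.ext
        rw [SubmonoidClass.coe_pow]
        apply Equiv.ext
        intro p
        have : (g : Equiv.Perm (F × F)) ^ 2 ^ (n + 1) = ((g : Equiv.Perm (F × F)) ^ 2) ^ 2 ^ n := by
          rw [← pow_mul, pow_succ, mul_comm]
        rw [this, pow_diag' _ _ _ hsq, hn, one_mul, one_mul]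
        rfl
    exact hpG.isNilpotent
end
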